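/- arXiv:1608.04461 — 14 statements merged into one kernel-verified Lean document; each statement's English description precedes it below -/
import Mathlib

section
/- Uniqueness of eigendecompositions (spectral core of Theorem 2). Let V be a real inner product space, u ∈ V, and d ∈ ℕ. Let (ω_i)_{i ∈ Fin d} and (ν_i)_{i ∈ Fin d} be orthonormal families in V with ∑ i, ω_i = u and ∑ i, ν_i = u, and with ⟪ω_i, ν_j⟫ ≥ 0 for all i, j. Suppose f, g : Fin d → ℝ satisfy ∑ i, f i • ω_i = ∑ i, g i • ν_i. Then for every t ∈ ℝ one has ∑_{i : f i = t} ω_i = ∑_{i : g i = t} ν_i; in particular f and g take the same values with the same multiplicities, and the corresponding 'projective units' (sums of frame vectors with a common eigenvalue) coincide. -/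
/-!
Write `c i j = ⟪ω i, ν j⟫`. Since both frames sum to `u`, the nonnegative matrix `c` is doubly
stochastic, and expanding by bilinearity gives, for `x = ∑ f i • ω i = ∑ g j • ν j`,
`∑ i j, c i j * (f i - g j) ^ 2 = ‖x‖² - 2 ⟪x, x⟫ + ‖x‖² = 0`.
Hence `c i j ≠ 0` forces `f i = g j`, so `ω i` with `f i = t` is orthogonal to every `ν j` with
`g j ≠ t`. Then `P = ∑_{f i = t} ω i` and `Q = ∑_{g j = t} ν j` have `⟪ω i, P⟫ = 1 = ⟪ω i, Q⟫` for
each summand `ω i` of `P`, and symmetrically for `Q`, so `P - Q` is orthogonal to itself.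
-/

open scoped RealInnerProductSpace
open Finset

section

variable {V : Type*} [NormedAddCommGroup V] [InnerProductSpace ℝ V] {ι κ : Type*}

namespace Orthonormal

variable {v : ι → V}

theorem inner_right_sum_one (hv : Orthonormal ℝ v) {s : Finset ι} {i : ι} (hi : i ∈ s) :
    ⟪v i, ∑ j ∈ s, v j⟫ = 1 := by
  simpa using hv.inner_right_sum (fun _ => (1 : ℝ)) hi

theorem inner_sum_self (hv : Orthonormal ℝ v) (s : Finset ι) :
    ⟪∑ i ∈ s, v i, ∑ i ∈ s, v i⟫ = #s := by
  simpa using hv.inner_sum (fun _ => (1 : ℝ)) (fun _ => 1) s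

variable [Fintype ι]

theorem inner_sum_smul_sum (hv : Orthonormal ℝ v) (a : ι → ℝ) :
    ⟪∑ i, a i • v i, ∑ i, v i⟫ = ∑ i, a i := by
  simpa using hv.inner_sum a (fun _ => 1) univ

theorem inner_sum_smul_self (hv : Orthonormal ℝ v) (a : ι → ℝ) :
    ⟪∑ i, a i • v i, ∑ i, a i • v i⟫ = ∑ i, a i ^ 2 := by
  simpa [sq] using hv.inner_sum a a univ

end Orthonormal

section TwoFrames

variable {ω : ι → V} {ν : κ → V}

theorem card_eq_card_of_sum_eq (hω : Orthonormal ℝ ω) (hν : Orthonormal ℝ ν)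
    {s : Finset ι} {t : Finset κ} (h : ∑ i ∈ s, ω i = ∑ j ∈ t, ν j) : #s = #t := by
  have hcard : (#s : ℝ) = #t := by
    rw [← hω.inner_sum_self, ← hν.inner_sum_self, h]
  exact_mod_cast hcard

variable [Fintype ι] [Fintype κ]

theorem inner_sum_eq_one_of_inner_ne_zero_imp_mem_iff (hω : Orthonormal ℝ ω)
    (hsum : ∑ i, ω i = ∑ j, ν j) {s : Finset ι} {t : Finset κ}
    (hst : ∀ i j, ⟪ω i, ν j⟫ ≠ 0 → (i ∈ s ↔ j ∈ t)) {i : ι} (hi : i ∈ s) :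
    ⟪ω i, ∑ j ∈ t, ν j⟫ = 1 := by
  have hvanish : ∀ j ∉ t, ⟪ω i, ν j⟫ = 0 := fun j hj =>
    by_contra fun hne => hj ((hst i j hne).1 hi)
  rw [inner_sum, sum_subset (subset_univ t) fun j _ hj => hvanish j hj, ← inner_sum, ← hsum,
    hω.inner_right_sum_one (mem_univ i)]

theorem sum_eq_sum_of_inner_ne_zero_imp_mem_iff (hω : Orthonormal ℝ ω) (hν : Orthonormal ℝ ν)
    (hsum : ∑ i, ω i = ∑ j, ν j) {s : Finset ι} {t : Finset κ}
    (hst : ∀ i j, ⟪ω i, ν j⟫ ≠ 0 → (i ∈ s ↔ j ∈ t)) :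
    ∑ i ∈ s, ω i = ∑ j ∈ t, ν j := by
  have hts : ∀ j i, ⟪ν j, ω i⟫ ≠ 0 → (j ∈ t ↔ i ∈ s) := fun j i h =>
    (hst i j (by rwa [real_inner_comm])).symm
  have hPP : ⟪∑ i ∈ s, ω i, ∑ i ∈ s, ω i⟫ = ⟪∑ i ∈ s, ω i, ∑ j ∈ t, ν j⟫ := by
    simp only [sum_inner]
    exact sum_congr rfl fun i hi => (hω.inner_right_sum_one hi).trans
      (inner_sum_eq_one_of_inner_ne_zero_imp_mem_iff hω hsum hst hi).symm
  have hQQ : ⟪∑ j ∈ t, ν j, ∑ j ∈ t, ν j⟫ = ⟪∑ j ∈ t, ν j, ∑ i ∈ s, ω i⟫ := by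
    simp only [sum_inner]
    exact sum_congr rfl fun j hj => (hν.inner_right_sum_one hj).trans
      (inner_sum_eq_one_of_inner_ne_zero_imp_mem_iff hν hsum.symm hts hj).symm
  rw [← sub_eq_zero, ← inner_self_eq_zero (𝕜 := ℝ), inner_sub_sub_self, hPP, hQQ,
    real_inner_comm (∑ i ∈ s, ω i)]
  ring

variable {f : ι → ℝ} {g : κ → ℝ}

theorem sum_inner_mul_sq_sub_eq_zero (hω : Orthonormal ℝ ω) (hν : Orthonormal ℝ ν)
    (hsum : ∑ i, ω i = ∑ j, ν j) (hfg : ∑ i, f i • ω i = ∑ j, g j • ν j) :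
    ∑ i, ∑ j, ⟪ω i, ν j⟫ * (f i - g j) ^ 2 = 0 := by
  have hexpand : ∑ i, ∑ j, ⟪ω i, ν j⟫ * (f i - g j) ^ 2
      = ⟪∑ i, f i ^ 2 • ω i, ∑ j, ν j⟫ - 2 * ⟪∑ i, f i • ω i, ∑ j, g j • ν j⟫
        + ⟪∑ i, ω i, ∑ j, g j ^ 2 • ν j⟫ := by
    simp only [sum_inner, inner_sum, real_inner_smul_left, real_inner_smul_right, mul_sum,
      ← sum_sub_distrib, ← sum_add_distrib]
    rw [sum_comm]
    exact sum_congr rfl fun i _ => sum_congr rfl fun j _ => by ring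
  have hleft : ⟪∑ i, f i ^ 2 • ω i, ∑ j, ν j⟫ = ∑ i, f i ^ 2 := by
    rw [← hsum, hω.inner_sum_smul_sum]
  have hright : ⟪∑ i, ω i, ∑ j, g j ^ 2 • ν j⟫ = ∑ j, g j ^ 2 := by
    rw [hsum, real_inner_comm, hν.inner_sum_smul_sum]
  have hcross : ⟪∑ i, f i • ω i, ∑ j, g j • ν j⟫ = ∑ i, f i ^ 2 := by
    rw [← hfg, hω.inner_sum_smul_self]
  have hnorm : ∑ i, f i ^ 2 = ∑ j, g j ^ 2 := by
    rw [← hω.inner_sum_smul_self, ← hν.inner_sum_smul_self, hfg]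
  rw [hexpand, hleft, hright, hcross, hnorm]
  ring

theorem eq_of_inner_ne_zero (hω : Orthonormal ℝ ω) (hν : Orthonormal ℝ ν)
    (hsum : ∑ i, ω i = ∑ j, ν j) (hpos : ∀ i j, 0 ≤ ⟪ω i, ν j⟫)
    (hfg : ∑ i, f i • ω i = ∑ j, g j • ν j) {i : ι} {j : κ} (h : ⟪ω i, ν j⟫ ≠ 0) :
    f i = g j := by
  have hterm_nonneg : ∀ i j, 0 ≤ ⟪ω i, ν j⟫ * (f i - g j) ^ 2 := fun i j =>
    mul_nonneg (hpos i j) (sq_nonneg _)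
  have hrow := (sum_eq_zero_iff_of_nonneg fun i _ => sum_nonneg fun j _ => hterm_nonneg i j).1
    (sum_inner_mul_sq_sub_eq_zero hω hν hsum hfg) i (mem_univ i)
  have hterm := (sum_eq_zero_iff_of_nonneg fun j _ => hterm_nonneg i j).1 hrow j (mem_univ j)
  rw [mul_eq_zero, or_iff_right h, sq_eq_zero_iff, sub_eq_zero] at hterm
  exact hterm

end TwoFrames

end

/-- Uniqueness of eigendecompositions (spectral core of Theorem 2). -/
theorem eigendecomposition_unique
    {V : Type*} [NormedAddCommGroup V] [InnerProductSpace ℝ V]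
    (u : V) (d : ℕ) (ω ν : Fin d → V)
    (hω : Orthonormal ℝ ω) (hν : Orthonormal ℝ ν)
    (hωsum : (∑ i, ω i) = u) (hνsum : (∑ i, ν i) = u)
    (hpos : ∀ i j, 0 ≤ ⟪ω i, ν j⟫)
    (f g : Fin d → ℝ)
    (hfg : (∑ i, f i • ω i) = ∑ i, g i • ν i) :
    ∀ t : ℝ,
      ((∑ i ∈ Finset.univ.filter (fun i => f i = t), ω i)
        = ∑ i ∈ Finset.univ.filter (fun i => g i = t), ν i) ∧
      (Finset.univ.filter (fun i => f i = t)).card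
        = (Finset.univ.filter (fun i => g i = t)).card := by
  intro t
  have hsum : ∑ i, ω i = ∑ j, ν j := hωsum.trans hνsum.symm
  have hlevel : ∀ i j, ⟪ω i, ν j⟫ ≠ 0 →
      (i ∈ univ.filter (fun i => f i = t) ↔ j ∈ univ.filter (fun j => g j = t)) :=
    fun i j h => by simp [eq_of_inner_ne_zero hω hν hsum hpos hfg h]
  have hproj := sum_eq_sum_of_inner_ne_zero_imp_mem_iff hω hν hsum hlevel
  exact ⟨hproj, card_eq_card_of_sum_eq hω hν hproj⟩
end

section
/- Well-definedness of spectral coefficients (hence of all spectral Rényi entropies). Let V be a real inner product space, u ∈ V, and d ∈ ℕ. Let (ω_j)_{j ∈ Fin d} and (ν_k)_{k ∈ Fin d} be orthonormal families in V with ∑ j, ω_j = u and ∑ k, ν_k = u, and with ⟪ω_j, ν_k⟫ ≥ 0 for all j, k. If p and q are probability vectors on Fin d with ∑ j, p j • ω_j = ∑ k, q k • ν_k, then there exists a permutation π of Fin d such that q = p ∘ π. In particular −∑ j, p j · log (p j) = −∑ k, q k · log (q k), so the spectral entropy of a state does not depend on the chosen decomposition into perfectly distinguishable pure states. -/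
open scoped RealInnerProductSpace

/-!
The cross-Gram matrix `M i j = ⟪ω i, ν j⟫` of two orthonormal frames with the same sum and
nonnegative overlaps is doubly stochastic, and it maps the coefficient vector `q` to `p`.
Orthonormality also gives `p ⬝ᵥ p = q ⬝ᵥ q`, so the identity
`∑ i j, M i j * (q j - p i) ^ 2 = q ⬝ᵥ q - p ⬝ᵥ p` forces `p i = q j` wherever `M i j ≠ 0`.
By Birkhoff's theorem the support of `M` contains a permutation, which matches `p` with `q`.
-/

open Finset Matrix

section DoublyStochastic

variable {n : Type*} [Fintype n] [DecidableEq n] {M : Matrix n n ℝ}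

theorem sum_mul_sub_mulVec_sq_of_mem_doublyStochastic (hM : M ∈ doublyStochastic ℝ n)
    (q : n → ℝ) :
    ∑ i, ∑ j, M i j * (q j - (M *ᵥ q) i) ^ 2 = q ⬝ᵥ q - (M *ᵥ q) ⬝ᵥ (M *ᵥ q) := by
  set p := M *ᵥ q
  have hexpand : ∀ i j, M i j * (q j - p i) ^ 2
      = M i j * q j ^ 2 - 2 * p i * (M i j * q j) + p i ^ 2 * M i j := fun i j => by ring
  simp only [hexpand, sum_add_distrib, sum_sub_distrib, ← mul_sum]
  rw [sum_comm, sum_congr rfl fun j _ => (sum_mul univ (M · j) (q j ^ 2)).symm]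
  simp only [sum_col_of_mem_doublyStochastic hM, sum_row_of_mem_doublyStochastic hM]
  change _ - ∑ i, 2 * p i * p i + _ = _
  simp only [dotProduct, one_mul, mul_one, ← sq, mul_assoc, ← mul_sum]
  ring

theorem mulVec_apply_eq_of_mem_doublyStochastic (hM : M ∈ doublyStochastic ℝ n) {q : n → ℝ}
    (hnorm : (M *ᵥ q) ⬝ᵥ (M *ᵥ q) = q ⬝ᵥ q) {i j : n} (hij : M i j ≠ 0) :
    (M *ᵥ q) i = q j := by
  have hzero := sum_mul_sub_mulVec_sq_of_mem_doublyStochastic hM q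
  rw [hnorm, sub_self] at hzero
  have hterm_nonneg : ∀ i j, 0 ≤ M i j * (q j - (M *ᵥ q) i) ^ 2 := fun i j =>
    mul_nonneg (nonneg_of_mem_doublyStochastic hM) (sq_nonneg _)
  rw [sum_eq_zero_iff_of_nonneg fun i _ => sum_nonneg fun j _ => hterm_nonneg i j] at hzero
  have hterm_zero := (sum_eq_zero_iff_of_nonneg fun j _ => hterm_nonneg i j).1 (hzero i (mem_univ _)) j
    (mem_univ _)
  rw [mul_eq_zero, sq_eq_zero_iff, sub_eq_zero] at hterm_zero
  exact (hterm_zero.resolve_left hij).symm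

theorem exists_perm_forall_pos_of_mem_doublyStochastic (hM : M ∈ doublyStochastic ℝ n) :
    ∃ σ : Equiv.Perm n, ∀ i, 0 < M i (σ i) := by
  obtain ⟨w, hw_nonneg, hw_sum, rfl⟩ := exists_eq_sum_perm_of_mem_doublyStochastic hM
  obtain ⟨σ, -, hσ⟩ := exists_lt_of_sum_lt (s := univ) (f := 0) (g := w) (by simp [hw_sum])
  refine ⟨σ, fun i => hσ.trans_le ?_⟩
  have hterm_nonneg : ∀ τ : Equiv.Perm n, 0 ≤ (w τ • τ.permMatrix ℝ) i (σ i) := fun τ =>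
    smul_nonneg (hw_nonneg τ) (nonneg_of_mem_doublyStochastic permMatrix_mem_doublyStochastic)
  calc w σ = (w σ • σ.permMatrix ℝ) i (σ i) := by simp [Equiv.toPEquiv_apply]
    _ ≤ ∑ τ, (w τ • τ.permMatrix ℝ) i (σ i) :=
      single_le_sum (fun τ _ => hterm_nonneg τ) (mem_univ σ)
    _ = (∑ τ, w τ • τ.permMatrix ℝ) i (σ i) := by simp only [Matrix.sum_apply]

theorem exists_perm_mulVec_eq_comp_of_mem_doublyStochastic (hM : M ∈ doublyStochastic ℝ n)
    {q : n → ℝ} (hnorm : (M *ᵥ q) ⬝ᵥ (M *ᵥ q) = q ⬝ᵥ q) :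
    ∃ σ : Equiv.Perm n, M *ᵥ q = q ∘ σ := by
  obtain ⟨σ, hσ⟩ := exists_perm_forall_pos_of_mem_doublyStochastic hM
  exact ⟨σ, funext fun i => mulVec_apply_eq_of_mem_doublyStochastic hM hnorm (hσ i).ne'⟩

end DoublyStochastic

section Frames

variable {V ι : Type*} [NormedAddCommGroup V] [InnerProductSpace ℝ V] [Fintype ι]
  {ω ν : ι → V}

theorem of_inner_mem_doublyStochastic [DecidableEq ι] (hω : Orthonormal ℝ ω)
    (hν : Orthonormal ℝ ν) (hsum : ∑ i, ω i = ∑ j, ν j) (hpos : ∀ i j, 0 ≤ ⟪ω i, ν j⟫) :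
    Matrix.of (fun i j => ⟪ω i, ν j⟫) ∈ doublyStochastic ℝ ι := by
  refine mem_doublyStochastic_iff_sum.2 ⟨hpos, fun i => ?_, fun j => ?_⟩
  · simpa [← inner_sum, ← hsum] using hω.inner_right_fintype 1 i
  · simpa [← sum_inner, hsum, real_inner_comm] using hν.inner_right_fintype 1 j

theorem Orthonormal.of_inner_mulVec_eq (hω : Orthonormal ℝ ω) {p q : ι → ℝ}
    (hpq : ∑ i, p i • ω i = ∑ j, q j • ν j) :
    Matrix.of (fun i j => ⟪ω i, ν j⟫) *ᵥ q = p := by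
  ext i
  rw [← hω.inner_right_fintype p i, hpq, inner_sum]
  simp [mulVec, dotProduct, real_inner_smul_right, mul_comm]

theorem Orthonormal.dotProduct_self_eq (hω : Orthonormal ℝ ω) (hν : Orthonormal ℝ ν)
    {p q : ι → ℝ} (hpq : ∑ i, p i • ω i = ∑ j, q j • ν j) :
    p ⬝ᵥ p = q ⬝ᵥ q := by
  have hωp := hω.inner_sum p p univ
  have hνq := hν.inner_sum q q univ
  rw [hpq, hνq] at hωp
  simpa [dotProduct] using hωp.symm

end Frames

theorem spectral_coefficients_well_defined_general
    {V : Type*} [NormedAddCommGroup V] [InnerProductSpace ℝ V]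
    (u : V) (d : ℕ) (ω ν : Fin d → V)
    (hω : Orthonormal ℝ ω) (hν : Orthonormal ℝ ν)
    (hωsum : (∑ j, ω j) = u) (hνsum : (∑ k, ν k) = u)
    (hpos : ∀ j k, 0 ≤ ⟪ω j, ν k⟫)
    (p q : Fin d → ℝ)
    (hpq : (∑ j, p j • ω j) = ∑ k, q k • ν k) :
    (∃ π : Equiv.Perm (Fin d), q = p ∘ π) ∧
      (-∑ j, p j * Real.log (p j)) = -∑ k, q k * Real.log (q k) := by
  have hM := of_inner_mem_doublyStochastic hω hν (hωsum.trans hνsum.symm) hpos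
  have hMq := hω.of_inner_mulVec_eq hpq
  obtain ⟨σ, hσ⟩ := exists_perm_mulVec_eq_comp_of_mem_doublyStochastic hM
    (hMq ▸ hω.dotProduct_self_eq hν hpq)
  have hqp : q = p ∘ σ.symm := by
    rw [← hMq, hσ]
    ext k
    simp
  refine ⟨⟨σ.symm, hqp⟩, ?_⟩
  rw [hqp]
  exact congrArg Neg.neg (Equiv.sum_comp σ.symm fun j => p j * Real.log (p j)).symm

/-- Well-definedness of spectral coefficients (hence of all spectral Rényi
entropies): two decompositions of the same state into maximal frames have the
same coefficients up to a permutation, hence the same spectral entropy. -/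
theorem spectral_coefficients_well_defined
    {V : Type*} [NormedAddCommGroup V] [InnerProductSpace ℝ V]
    (u : V) (d : ℕ) (ω ν : Fin d → V)
    (hω : Orthonormal ℝ ω) (hν : Orthonormal ℝ ν)
    (hωsum : (∑ j, ω j) = u) (hνsum : (∑ k, ν k) = u)
    (hpos : ∀ j k, 0 ≤ ⟪ω j, ν k⟫)
    (p q : Fin d → ℝ)
    (hp : ∀ j, 0 ≤ p j) (hp1 : (∑ j, p j) = 1)
    (hq : ∀ k, 0 ≤ q k) (hq1 : (∑ k, q k) = 1)
    (hpq : (∑ j, p j • ω j) = ∑ k, q k • ν k) :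
    (∃ π : Equiv.Perm (Fin d), q = p ∘ π) ∧
      (-∑ j, p j * Real.log (p j)) = -∑ k, q k * Real.log (q k) :=
  spectral_coefficients_well_defined_general u d ω ν hω hν hωsum hνsum hpos p q hpq
end

section
/- Klein's inequality (Theorem 6, spectral form). Let V be a real inner product space, u ∈ V, and d ∈ ℕ. Let (ω_j)_{j ∈ Fin d} and (ν_k)_{k ∈ Fin d} be families in V with ∑ j, ω_j = u, ∑ k, ν_k = u, ⟪ω_j, u⟫ = 1 and ⟪ν_k, u⟫ = 1 for all j, k, and ⟪ω_j, ν_k⟫ ≥ 0 for all j, k. Let p and q be probability vectors on Fin d with q k > 0 for all k, and set ω := ∑ j, p j • ω_j. Then ∑ j, p j · log (p j) − ∑ k, ⟪ω, ν_k⟫ · log (q k) ≥ 0. (Equivalently, the relative entropy S(ω‖ν) = −S(ω) − ⟪ω, log ν⟫ is nonnegative, where ν = ∑ k, q k • ν_k and log ν = ∑ k, log (q k) • ν_k.) -/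
/-!
The Gram matrix `⟪ω j, ν k⟫` of two frames is doubly stochastic, and the outcome distribution of
`ω = ∑ j, p j • ω j` measured in the frame `ν` is `p ᵥ* M`. Averaging the pointwise bound
`x - y ≤ x log x - x log y` over the weights `M j k` then gives the inequality, since the
right-hand sides add up to the relative entropy and the left-hand sides to `∑ p - ∑ q = 0`.
-/

open scoped RealInnerProductSpace
open Finset Matrix Real

theorem Real.sub_le_mul_log_sub_mul_log {x y : ℝ} (hx : 0 ≤ x) (hy : 0 < y) :
    x - y ≤ x * log x - x * log y := by
  rcases hx.eq_or_lt with rfl | hx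
  · simpa using hy.le
  · have hlog := log_le_sub_one_of_pos (div_pos hy hx)
    rw [log_div hy.ne' hx.ne', le_sub_iff_add_le, le_div_iff₀ hx] at hlog
    nlinarith

theorem Matrix.sum_vecMul_mul_log_le_sum_mul_log {n : Type*} [Fintype n] [DecidableEq n]
    {M : Matrix n n ℝ} (hM : M ∈ doublyStochastic ℝ n) {p q : n → ℝ}
    (hp : ∀ i, 0 ≤ p i) (hq : ∀ i, 0 < q i) (hqp : ∑ i, q i ≤ ∑ i, p i) :
    ∑ k, (p ᵥ* M) k * log (q k) ≤ ∑ j, p j * log (p j) := by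
  rw [mem_doublyStochastic_iff_sum] at hM
  obtain ⟨hM_nonneg, hM_row, hM_col⟩ := hM
  have h_cross : ∑ k, (p ᵥ* M) k * log (q k) = ∑ j, ∑ k, M j k * (p j * log (q k)) := by
    simp only [vecMul, dotProduct, sum_mul]
    rw [sum_comm]
    exact sum_congr rfl fun j _ => sum_congr rfl fun k _ => by ring
  have h_self : ∑ j, p j * log (p j) = ∑ j, ∑ k, M j k * (p j * log (p j)) := by
    simp only [← sum_mul, hM_row, one_mul]
  have h_mass : ∑ j, ∑ k, M j k * (p j - q k) = ∑ j, p j - ∑ k, q k := by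
    simp only [mul_sub, sum_sub_distrib, ← sum_mul, hM_row, one_mul]
    rw [sum_comm]
    simp only [← sum_mul, hM_col, one_mul]
  have h_pointwise : ∑ j, ∑ k, M j k * (p j - q k)
      ≤ ∑ j, ∑ k, M j k * (p j * log (p j) - p j * log (q k)) :=
    sum_le_sum fun j _ => sum_le_sum fun k _ =>
      mul_le_mul_of_nonneg_left (sub_le_mul_log_sub_mul_log (hp j) (hq k)) (hM_nonneg j k)
  simp only [mul_sub, sum_sub_distrib] at h_pointwise h_mass
  rw [h_cross, h_self]
  linarith

theorem Matrix.of_inner_mem_doublyStochastic {V n : Type*} [NormedAddCommGroup V]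
    [InnerProductSpace ℝ V] [Fintype n] [DecidableEq n] {u : V} {ω ν : n → V}
    (hωsum : ∑ j, ω j = u) (hνsum : ∑ k, ν k = u)
    (hωn : ∀ j, ⟪ω j, u⟫ = 1) (hνn : ∀ k, ⟪ν k, u⟫ = 1) (hpos : ∀ j k, 0 ≤ ⟪ω j, ν k⟫) :
    of (fun j k => ⟪ω j, ν k⟫) ∈ doublyStochastic ℝ n := by
  refine mem_doublyStochastic_iff_sum.mpr ⟨hpos, fun j => ?_, fun k => ?_⟩
  · simp only [of_apply, ← inner_sum, hνsum, hωn]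
  · rw [← hνn k, real_inner_comm]
    simp only [of_apply, ← sum_inner, hωsum]

theorem inner_sum_smul_eq_vecMul {V n : Type*} [NormedAddCommGroup V] [InnerProductSpace ℝ V]
    [Fintype n] (ω ν : n → V) (p : n → ℝ) (k : n) :
    ⟪∑ j, p j • ω j, ν k⟫ = (p ᵥ* of fun j k => ⟪ω j, ν k⟫) k := by
  simp only [sum_inner, real_inner_smul_left, vecMul, dotProduct, of_apply]

theorem klein_inequality_general
    {V : Type*} [NormedAddCommGroup V] [InnerProductSpace ℝ V]
    (u : V) (d : ℕ) (ω ν : Fin d → V)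
    (hωsum : (∑ j, ω j) = u) (hνsum : (∑ k, ν k) = u)
    (hωn : ∀ j, ⟪ω j, u⟫ = 1) (hνn : ∀ k, ⟪ν k, u⟫ = 1)
    (hpos : ∀ j k, 0 ≤ ⟪ω j, ν k⟫)
    (p q : Fin d → ℝ)
    (hp : ∀ j, 0 ≤ p j) (hp1 : (∑ j, p j) = 1)
    (hq1 : (∑ k, q k) = 1)
    (hqpos : ∀ k, 0 < q k) :
    (∑ j, p j * Real.log (p j))
      - (∑ k, ⟪(∑ j, p j • ω j), ν k⟫ * Real.log (q k)) ≥ 0 := by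
  have hM := of_inner_mem_doublyStochastic hωsum hνsum hωn hνn hpos
  have h := sum_vecMul_mul_log_le_sum_mul_log hM hp hqpos (by rw [hp1, hq1])
  simp only [inner_sum_smul_eq_vecMul]
  linarith

/-- Klein's inequality (Theorem 6, spectral form): the relative entropy
`S(ω‖ν) = ∑ j, p j · log (p j) − ∑ k, ⟪ω, ν k⟫ · log (q k)` is nonnegative. -/
theorem klein_inequality
    {V : Type*} [NormedAddCommGroup V] [InnerProductSpace ℝ V]
    (u : V) (d : ℕ) (ω ν : Fin d → V)
    (hωsum : (∑ j, ω j) = u) (hνsum : (∑ k, ν k) = u)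
    (hωn : ∀ j, ⟪ω j, u⟫ = 1) (hνn : ∀ k, ⟪ν k, u⟫ = 1)
    (hpos : ∀ j k, 0 ≤ ⟪ω j, ν k⟫)
    (p q : Fin d → ℝ)
    (hp : ∀ j, 0 ≤ p j) (hp1 : (∑ j, p j) = 1)
    (hq : ∀ k, 0 ≤ q k) (hq1 : (∑ k, q k) = 1)
    (hqpos : ∀ k, 0 < q k) :
    (∑ j, p j * Real.log (p j))
      - (∑ k, ⟪(∑ j, p j • ω j), ν k⟫ * Real.log (q k)) ≥ 0 :=
  klein_inequality_general u d ω ν hωsum hνsum hωn hνn hpos p q hp hp1 hq1 hqpos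
end

section
/- The second law for projective measurements (Theorem 4, spectral form). Let V be a real inner product space, u ∈ V, and d ∈ ℕ. Let (e_i)_{i ∈ Fin d} be an orthonormal family with ∑ i, e_i = u, and let (ω_j)_{j ∈ Fin d} be a family with ∑ j, ω_j = u, ⟪u, ω_j⟫ = 1 for all j, and ⟪e_i, ω_j⟫ ≥ 0 for all i, j. Let p be a probability vector on Fin d, set ω := ∑ j, p j • ω_j and q i := ⟪e_i, ω⟫. Then −∑ i, q i · log (q i) ≥ −∑ j, p j · log (p j). (Here q is the vector of spectral coefficients of the post-measurement ensemble state ω' = ∑_a P_a ω of a projective measurement whose eigenfaces are spanned by blocks of the frame (e_i); thus projective measurements do not decrease spectral entropy.) -/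
open scoped RealInnerProductSpace
open Matrix Real Finset

/-! The matrix `M i j = ⟪e i, ω j⟫` is doubly stochastic: its rows sum to `⟪e i, u⟫ = 1` by
orthonormality, its columns to `⟪u, ω j⟫ = 1`, and `q = M p`. Concavity of `η x = -x log x`
applied to each row gives `∑ j, M i j · η (p j) ≤ η (q i)`, and summing over `i` with the
column sums equal to one yields `∑ j, η (p j) ≤ ∑ i, η (q i)`. -/

theorem Matrix.sum_negMulLog_le_sum_negMulLog_mulVec {n : Type*} [Fintype n] [DecidableEq n]
    {M : Matrix n n ℝ} (hM : M ∈ doublyStochastic ℝ n) {p : n → ℝ} (hp : ∀ j, 0 ≤ p j) :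
    ∑ j, negMulLog (p j) ≤ ∑ i, negMulLog ((M *ᵥ p) i) := by
  have hrow (i : n) : ∑ j, M i j * negMulLog (p j) ≤ negMulLog ((M *ᵥ p) i) := by
    simpa [mulVec, dotProduct] using concaveOn_negMulLog.le_map_sum (t := univ) (w := M i)
      (fun j _ => nonneg_of_mem_doublyStochastic hM) (sum_row_of_mem_doublyStochastic hM i)
      (fun j _ => hp j)
  calc ∑ j, negMulLog (p j) = ∑ j, (∑ i, M i j) * negMulLog (p j) := by
        simp [sum_col_of_mem_doublyStochastic hM]
    _ = ∑ i, ∑ j, M i j * negMulLog (p j) := by simp_rw [sum_mul]; exact sum_comm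
    _ ≤ ∑ i, negMulLog ((M *ᵥ p) i) := sum_le_sum fun i _ => hrow i

theorem Orthonormal.matrix_of_inner_mem_doublyStochastic {ι V : Type*} [Fintype ι] [DecidableEq ι]
    [NormedAddCommGroup V] [InnerProductSpace ℝ V] {u : V} {e ω : ι → V}
    (he : Orthonormal ℝ e) (hesum : ∑ i, e i = u) (hωsum : ∑ j, ω j = u)
    (hωn : ∀ j, ⟪u, ω j⟫ = 1) (hpos : ∀ i j, 0 ≤ ⟪e i, ω j⟫) :
    Matrix.of (fun i j => ⟪e i, ω j⟫) ∈ doublyStochastic ℝ ι := by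
  refine mem_doublyStochastic_iff_sum.2 ⟨hpos, fun i => ?_, fun j => ?_⟩
  · rw [orthonormal_iff_ite] at he
    simp only [of_apply]
    rw [← inner_sum, hωsum, ← hesum, inner_sum]
    simp [he]
  · simpa [← sum_inner, hesum] using hωn j

theorem second_law_projective_measurements_general
    {V : Type*} [NormedAddCommGroup V] [InnerProductSpace ℝ V]
    (u : V) (d : ℕ) (e ω : Fin d → V)
    (he : Orthonormal ℝ e) (hesum : (∑ i, e i) = u)
    (hωsum : (∑ j, ω j) = u) (hωn : ∀ j, ⟪u, ω j⟫ = 1)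
    (hpos : ∀ i j, 0 ≤ ⟪e i, ω j⟫)
    (p : Fin d → ℝ) (hp : ∀ j, 0 ≤ p j)
    (q : Fin d → ℝ) (hq : ∀ i, q i = ⟪e i, (∑ j, p j • ω j)⟫) :
    (-∑ i, q i * Real.log (q i)) ≥ -∑ j, p j * Real.log (p j) := by
  have hqM : q = Matrix.of (fun i j => ⟪e i, ω j⟫) *ᵥ p := funext fun i => by
    simp [hq, mulVec, dotProduct, inner_sum, real_inner_smul_right, mul_comm]
  simpa [negMulLog, sum_neg_distrib, hqM] using sum_negMulLog_le_sum_negMulLog_mulVec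
    (he.matrix_of_inner_mem_doublyStochastic hesum hωsum hωn hpos) hp

/-- The second law for projective measurements (Theorem 4, spectral form):
the spectral entropy of the post-measurement ensemble state is at least the
spectral entropy of the initial state. -/
theorem second_law_projective_measurements
    {V : Type*} [NormedAddCommGroup V] [InnerProductSpace ℝ V]
    (u : V) (d : ℕ) (e ω : Fin d → V)
    (he : Orthonormal ℝ e) (hesum : (∑ i, e i) = u)
    (hωsum : (∑ j, ω j) = u) (hωn : ∀ j, ⟪u, ω j⟫ = 1)
    (hpos : ∀ i j, 0 ≤ ⟪e i, ω j⟫)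
    (p : Fin d → ℝ) (hp : ∀ j, 0 ≤ p j) (hp1 : (∑ j, p j) = 1)
    (q : Fin d → ℝ) (hq : ∀ i, q i = ⟪e i, (∑ j, p j • ω j)⟫) :
    (-∑ i, q i * Real.log (q i)) ≥ -∑ j, p j * Real.log (p j) :=
  second_law_projective_measurements_general u d e ω he hesum hωsum hωn hpos p hp q hq
end

section
/- Concavity of spectral entropy (Theorem 5, spectral form). Let V be a real inner product space, u ∈ V, and d, n ∈ ℕ. Let (μ_m)_{m ∈ Fin d} be an orthonormal family with ∑ m, μ_m = u. For each j ∈ Fin n let (ν_{j,k})_{k ∈ Fin d} be a family with ∑ k, ν_{j,k} = u, ⟪ν_{j,k}, u⟫ = 1 for all k, and ⟪ν_{j,k}, μ_m⟫ ≥ 0 for all k, m. Let p be a probability vector on Fin n, for each j let q_j be a probability vector on Fin d, and let r be a probability vector on Fin d with r m > 0 for all m. If ∑ j, p j • (∑ k, q_j k • ν_{j,k}) = ∑ m, r m • μ_m, then −∑ m, r m · log (r m) ≥ ∑ j, p j · (−∑ k, q_j k · log (q_j k)). (That is, S(∑ j p j ω_j) ≥ ∑ j p j S(ω_j): spectral entropy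 is concave, so mixing does not decrease entropy.) -/
open scoped RealInnerProductSpace

/-!
Pair the states `ν j k` with the frame `μ` to get `A j k m = ⟪ν j k, μ m⟫`. Because both families
are normalized and sum to `u`, each `A j` is doubly stochastic, and projecting the mixing identity
onto `μ m` gives `r m = ∑ j k, (p j * A j k m) * q j k`, a convex combination of the `q j k`.
Jensen's inequality for the convex function `x ↦ x log x` at each `m`, summed over `m` using the row
sums of `A j`, is exactly the concavity of the entropy.
-/

open Finset Real

theorem sum_mul_log_sum_le {ι κ : Type*} [Fintype ι] [Fintype κ]
    (W : κ → ι → ℝ) (hW : ∀ m i, 0 ≤ W m i) (hW1 : ∀ m, ∑ i, W m i = 1)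
    (x : ι → ℝ) (hx : ∀ i, 0 ≤ x i) :
    ∑ m, (∑ i, W m i * x i) * log (∑ i, W m i * x i)
      ≤ ∑ i, (∑ m, W m i) * (x i * log (x i)) := by
  have jensen : ∀ m, (∑ i, W m i * x i) * log (∑ i, W m i * x i)
      ≤ ∑ i, W m i * (x i * log (x i)) := fun m =>
    convexOn_mul_log.map_sum_le (fun i _ => hW m i) (hW1 m) (fun i _ => Set.mem_Ici.mpr (hx i))
  calc _ ≤ ∑ m, ∑ i, W m i * (x i * log (x i)) := sum_le_sum fun m _ => jensen m
    _ = _ := by rw [sum_comm]; simp only [sum_mul]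

section Frame

variable {V ι : Type*} [NormedAddCommGroup V] [InnerProductSpace ℝ V] [Fintype ι]
  {u : V} {μ : ι → V}

theorem Orthonormal.inner_sum_left_eq_one (hμ : Orthonormal ℝ μ) (m : ι) :
    ⟪∑ i, μ i, μ m⟫ = 1 := by
  simpa using hμ.inner_left_fintype (fun _ => (1 : ℝ)) m

theorem sum_inner_frame_eq_one {κ : Type*} [Fintype κ] (hμ : Orthonormal ℝ μ)
    (hμsum : ∑ i, μ i = u) {ν : κ → V} (hνsum : ∑ k, ν k = u) (m : ι) :
    ∑ k, ⟪ν k, μ m⟫ = 1 := by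
  rw [← sum_inner, hνsum, ← hμsum, hμ.inner_sum_left_eq_one]

end Frame

theorem spectral_entropy_concave_general
    {V : Type*} [NormedAddCommGroup V] [InnerProductSpace ℝ V]
    (u : V) (d n : ℕ) (μ : Fin d → V)
    (hμ : Orthonormal ℝ μ) (hμsum : (∑ m, μ m) = u)
    (ν : Fin n → Fin d → V)
    (hνsum : ∀ j, (∑ k, ν j k) = u)
    (hνn : ∀ j k, ⟪ν j k, u⟫ = 1)
    (hpos : ∀ j k m, 0 ≤ ⟪ν j k, μ m⟫)
    (p : Fin n → ℝ) (hp : ∀ j, 0 ≤ p j) (hp1 : (∑ j, p j) = 1)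
    (q : Fin n → Fin d → ℝ) (hq : ∀ j k, 0 ≤ q j k)
    (r : Fin d → ℝ)
    (hmix : (∑ j, p j • (∑ k, q j k • ν j k)) = ∑ m, r m • μ m) :
    (-∑ m, r m * Real.log (r m)) ≥ ∑ j, p j * (-∑ k, q j k * Real.log (q j k)) := by
  set W : Fin d → Fin n × Fin d → ℝ := fun m jk => p jk.1 * ⟪ν jk.1 jk.2, μ m⟫
  have hr : ∀ m, r m = ∑ jk, W m jk * q jk.1 jk.2 := fun m => by
    have h := congrArg (⟪·, μ m⟫) hmix
    simp only [hμ.inner_left_fintype, conj_trivial, sum_inner, real_inner_smul_left] at h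
    simp only [← h, W, Fintype.sum_prod_type, mul_sum]
    exact sum_congr rfl fun j _ => sum_congr rfl fun k _ => by ring
  have hW1 : ∀ m, ∑ jk, W m jk = 1 := fun m => by
    simp only [W, Fintype.sum_prod_type, ← mul_sum, sum_inner_frame_eq_one hμ hμsum (hνsum _),
      mul_one, hp1]
  have hWrow : ∀ jk, ∑ m, W m jk = p jk.1 := fun jk => by
    simp only [W, ← mul_sum, ← inner_sum, hμsum, hνn, mul_one]
  have key := sum_mul_log_sum_le W (fun m jk => mul_nonneg (hp _) (hpos _ _ _)) hW1
    (fun jk => q jk.1 jk.2) (fun jk => hq _ _)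
  simp only [← hr, hWrow, Fintype.sum_prod_type] at key
  simpa only [mul_neg, sum_neg_distrib, mul_sum, ge_iff_le, neg_le_neg_iff] using key

/-- Concavity of spectral entropy (Theorem 5, spectral form):
`S(∑ j p j ω_j) ≥ ∑ j p j S(ω_j)`, so mixing does not decrease entropy. -/
theorem spectral_entropy_concave
    {V : Type*} [NormedAddCommGroup V] [InnerProductSpace ℝ V]
    (u : V) (d n : ℕ) (μ : Fin d → V)
    (hμ : Orthonormal ℝ μ) (hμsum : (∑ m, μ m) = u)
    (ν : Fin n → Fin d → V)
    (hνsum : ∀ j, (∑ k, ν j k) = u)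
    (hνn : ∀ j k, ⟪ν j k, u⟫ = 1)
    (hpos : ∀ j k m, 0 ≤ ⟪ν j k, μ m⟫)
    (p : Fin n → ℝ) (hp : ∀ j, 0 ≤ p j) (hp1 : (∑ j, p j) = 1)
    (q : Fin n → Fin d → ℝ) (hq : ∀ j k, 0 ≤ q j k) (hq1 : ∀ j, (∑ k, q j k) = 1)
    (r : Fin d → ℝ) (hr : ∀ m, 0 < r m) (hr1 : (∑ m, r m) = 1)
    (hmix : (∑ j, p j • (∑ k, q j k • ν j k)) = ∑ m, r m • μ m) :
    (-∑ m, r m * Real.log (r m)) ≥ ∑ j, p j * (-∑ k, q j k * Real.log (q j k)) :=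
  spectral_entropy_concave_general u d n μ hμ hμsum ν hνsum hνn hpos p hp hp1 q hq r hmix
end

section
/- Measurement Shannon entropy dominates spectral entropy (Theorem 7, spectral form, Shannon case). Let V be a real inner product space, u ∈ V, and d, N ∈ ℕ. Let (ω_j)_{j ∈ Fin d} satisfy ∑ j, ω_j = u and ⟪u, ω_j⟫ = 1 for all j. Let (ν_l)_{l ∈ Fin N} and c : Fin N → ℝ satisfy 0 ≤ c l ≤ 1, ⟪u, ν_l⟫ = 1, ∑ l, c l • ν_l = u, and ⟪ν_l, ω_j⟫ ≥ 0 for all l, j. Let p be a probability vector on Fin d, set ω := ∑ j, p j • ω_j and q l := c l · ⟪ν_l, ω⟫. Then −∑ l, q l · log (q l) ≥ −∑ j, p j · log (p j). (The q l are the outcome probabilities on ω of a fine-grained measurement with effects e_l = c l • ν_l; thus the Shannon measurement entropy Ŝ(ω) is at least the spectral entropy S(ω).) -/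
/-!
The outcome distribution is `q = M p` for the matrix `M l j = c l ⟪ν l, ω j⟫`, whose columns sum
to `1` (since `∑ c l ν l = u` and `⟪u, ω j⟫ = 1`) and whose rows sum to `c l ≤ 1` (since
`∑ ω j = u` and `⟪u, ν l⟫ = 1`). Such a substochastic matrix can only increase Shannon entropy:
Gibbs' inequality `p log q ≤ p log p + q - p`, weighted by `M l j` and summed, gives
`∑ q log q ≤ ∑ p log p + ∑ (c l - 1) q l ≤ ∑ p log p`.
-/

open scoped RealInnerProductSpace
open Real Finset Matrix

lemma mul_log_le_mul_log_add_sub {b c : ℝ} (hb : 0 ≤ b) (hc : 0 < c) :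
    b * log c ≤ b * log b + (c - b) := by
  rcases hb.eq_or_lt with rfl | hb
  · simpa using hc.le
  have hlog : log c - log b ≤ c / b - 1 := by
    rw [← log_div hc.ne' hb.ne']
    exact log_le_sub_one_of_pos (div_pos hc hb)
  have := mul_le_mul_of_nonneg_left hlog hb.le
  rw [mul_sub, mul_sub, mul_div_cancel₀ _ hb.ne', mul_one] at this
  linarith

lemma dotProduct_mul_log_le {ι : Type*} [Fintype ι] {w p : ι → ℝ}
    (hw : ∀ j, 0 ≤ w j) (hp : ∀ j, 0 ≤ p j) :
    (w ⬝ᵥ p) * log (w ⬝ᵥ p) ≤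
      w ⬝ᵥ (fun j => p j * log (p j)) + (∑ j, w j - 1) * (w ⬝ᵥ p) := by
  have hwp : ∀ j, 0 ≤ w j * p j := fun j => mul_nonneg (hw j) (hp j)
  rcases (sum_nonneg fun j _ => hwp j : 0 ≤ w ⬝ᵥ p).eq_or_lt with hq | hq
  · have hzero : ∀ j, w j * p j = 0 := fun j =>
      (sum_eq_zero_iff_of_nonneg fun j _ => hwp j).mp hq.symm j (mem_univ j)
    simp only [zero_mul, mul_zero, dotProduct, ← mul_assoc, hzero, sum_const_zero,
      add_zero, le_refl]
  calc (w ⬝ᵥ p) * log (w ⬝ᵥ p) = ∑ j, w j * (p j * log (w ⬝ᵥ p)) := by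
        simp only [dotProduct, sum_mul, mul_assoc]
    _ ≤ ∑ j, w j * (p j * log (p j) + (w ⬝ᵥ p - p j)) := by
        gcongr with j
        exacts [hw j, mul_log_le_mul_log_add_sub (hp j) hq]
    _ = w ⬝ᵥ (fun j => p j * log (p j)) + (∑ j, w j - 1) * (w ⬝ᵥ p) := by
        simp only [dotProduct, mul_add, mul_sub, sum_add_distrib, sum_sub_distrib, ← sum_mul]
        ring

theorem sum_mul_log_mulVec_le {κ ι : Type*} [Fintype κ] [Fintype ι] {M : Matrix κ ι ℝ}
    (hM : ∀ l j, 0 ≤ M l j) (hcol : ∀ j, ∑ l, M l j = 1) (hrow : ∀ l, ∑ j, M l j ≤ 1)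
    {p : ι → ℝ} (hp : ∀ j, 0 ≤ p j) :
    ∑ l, (M *ᵥ p) l * log ((M *ᵥ p) l) ≤ ∑ j, p j * log (p j) := by
  have hq : ∀ l, 0 ≤ (M *ᵥ p) l := fun l => sum_nonneg fun j _ => mul_nonneg (hM l j) (hp j)
  calc ∑ l, (M *ᵥ p) l * log ((M *ᵥ p) l)
      ≤ ∑ l, (M l ⬝ᵥ (fun j => p j * log (p j)) + (∑ j, M l j - 1) * (M *ᵥ p) l) :=
        sum_le_sum fun l _ => dotProduct_mul_log_le (hM l) hp
    _ ≤ ∑ l, M l ⬝ᵥ (fun j => p j * log (p j)) := by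
        gcongr with l
        exact add_le_of_nonpos_right
          (mul_nonpos_of_nonpos_of_nonneg (by linarith [hrow l]) (hq l))
    _ = ∑ j, p j * log (p j) := by
        simp only [dotProduct]
        rw [sum_comm]
        simp only [← sum_mul, hcol, one_mul]

section Measurement

variable {V : Type*} [NormedAddCommGroup V] [InnerProductSpace ℝ V]
  {ι κ : Type*}

/-- `measurementMatrix c ν ω l j` is the probability of outcome `l` of the measurement with
effects `c l • ν l` on the state `ω j`. -/
def measurementMatrix (c : κ → ℝ) (ν : κ → V) (ω : ι → V) : Matrix κ ι ℝ :=
  Matrix.of fun l j => c l * ⟪ν l, ω j⟫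

lemma sum_measurementMatrix_col [Fintype κ] {u : V} {c : κ → ℝ} {ν : κ → V} {ω : ι → V}
    (hcsum : ∑ l, c l • ν l = u) (hωn : ∀ j, ⟪u, ω j⟫ = 1) (j : ι) :
    ∑ l, measurementMatrix c ν ω l j = 1 := by
  rw [← hωn j, ← hcsum, sum_inner]
  simp [measurementMatrix, real_inner_smul_left]

lemma sum_measurementMatrix_row [Fintype ι] {u : V} {c : κ → ℝ} {ν : κ → V} {ω : ι → V}
    (hωsum : ∑ j, ω j = u) (hνn : ∀ l, ⟪u, ν l⟫ = 1) (l : κ) :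
    ∑ j, measurementMatrix c ν ω l j = c l := by
  simp [measurementMatrix, ← mul_sum, ← inner_sum, hωsum, real_inner_comm, hνn]

lemma measurementMatrix_mulVec [Fintype ι] (c : κ → ℝ) (ν : κ → V) (ω : ι → V) (p : ι → ℝ) (l : κ) :
    (measurementMatrix c ν ω *ᵥ p) l = c l * ⟪ν l, ∑ j, p j • ω j⟫ := by
  simp [measurementMatrix, mulVec, dotProduct, inner_sum, real_inner_smul_right, mul_sum,
    mul_comm, mul_left_comm]

end Measurement

theorem measurement_entropy_ge_spectral_entropy_general
    {V : Type*} [NormedAddCommGroup V] [InnerProductSpace ℝ V]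
    (u : V) (d N : ℕ) (ω : Fin d → V)
    (hωsum : (∑ j, ω j) = u) (hωn : ∀ j, ⟪u, ω j⟫ = 1)
    (ν : Fin N → V) (c : Fin N → ℝ)
    (hc0 : ∀ l, 0 ≤ c l) (hc1 : ∀ l, c l ≤ 1)
    (hνn : ∀ l, ⟪u, ν l⟫ = 1)
    (hcsum : (∑ l, c l • ν l) = u)
    (hpos : ∀ l j, 0 ≤ ⟪ν l, ω j⟫)
    (p : Fin d → ℝ) (hp : ∀ j, 0 ≤ p j)
    (q : Fin N → ℝ) (hq : ∀ l, q l = c l * ⟪ν l, (∑ j, p j • ω j)⟫) :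
    (-∑ l, q l * Real.log (q l)) ≥ -∑ j, p j * Real.log (p j) := by
  have hqM : q = measurementMatrix c ν ω *ᵥ p := funext fun l => by
    rw [hq, measurementMatrix_mulVec]
  rw [ge_iff_le, neg_le_neg_iff, hqM]
  refine sum_mul_log_mulVec_le (fun l j => mul_nonneg (hc0 l) (hpos l j))
    (sum_measurementMatrix_col hcsum hωn)
    (fun l => (sum_measurementMatrix_row hωsum hνn l).trans_le (hc1 l)) hp

/-- Measurement Shannon entropy dominates spectral entropy (Theorem 7,
spectral form, Shannon case): the Shannon entropy of the outcome
probabilities of any fine-grained measurement on a state is at least the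
spectral entropy of the state. -/
theorem measurement_entropy_ge_spectral_entropy
    {V : Type*} [NormedAddCommGroup V] [InnerProductSpace ℝ V]
    (u : V) (d N : ℕ) (ω : Fin d → V)
    (hωsum : (∑ j, ω j) = u) (hωn : ∀ j, ⟪u, ω j⟫ = 1)
    (ν : Fin N → V) (c : Fin N → ℝ)
    (hc0 : ∀ l, 0 ≤ c l) (hc1 : ∀ l, c l ≤ 1)
    (hνn : ∀ l, ⟪u, ν l⟫ = 1)
    (hcsum : (∑ l, c l • ν l) = u)
    (hpos : ∀ l j, 0 ≤ ⟪ν l, ω j⟫)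
    (p : Fin d → ℝ) (hp : ∀ j, 0 ≤ p j) (hp1 : (∑ j, p j) = 1)
    (q : Fin N → ℝ) (hq : ∀ l, q l = c l * ⟪ν l, (∑ j, p j • ω j)⟫) :
    (-∑ l, q l * Real.log (q l)) ≥ -∑ j, p j * Real.log (p j) :=
  measurement_entropy_ge_spectral_entropy_general u d N ω hωsum hωn ν c hc0 hc1 hνn hcsum hpos p hp
    q hq
end

section
/- Measurement Rényi entropy dominates spectral Rényi entropy (Theorem 7, spectral form, Rényi case). Let V be a real inner product space, u ∈ V, and d, N ∈ ℕ. Let (ω_j)_{j ∈ Fin d} satisfy ∑ j, ω_j = u and ⟪u, ω_j⟫ = 1 for all j. Let (ν_l)_{l ∈ Fin N} and c : Fin N → ℝ satisfy 0 ≤ c l ≤ 1, ⟪u, ν_l⟫ = 1, ∑ l, c l • ν_l = u, and ⟪ν_l, ω_j⟫ ≥ 0 for all l, j. Let p be a probability vector on Fin d with d ≥ 1, set ω := ∑ j, p j • ω_j and q l := c l · ⟪ν_l, ω⟫. Then for every real α with 0 < α and α ≠ 1: (1/(1−α)) · log (∑ l, (q l)^α) ≥ (1/(1−α)) · log (∑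 j, (p j)^α), where x^α denotes the real power Real.rpow. -/
/-!
Write `a l j = ⟪ν l, ω j⟫`. Then every row `a l` is a probability vector, the matrix
`c l * a l j` has unit column sums, and `q l = c l * ∑ j, a l j * p j`. For `α ≤ 1`, concavity
of `t ↦ t ^ α` on each row together with `c ≤ c ^ α` gives `∑ q ^ α ≥ ∑ p ^ α`; for `α ≥ 1`
convexity and `c ^ α ≤ c` give the reverse, and the sign of `1 - α` turns both cases into the
same inequality of entropies.
-/

open scoped RealInnerProductSpace

open Finset

noncomputable def renyiEntropy {ι : Type*} [Fintype ι] (α : ℝ) (p : ι → ℝ) : ℝ :=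
  1 / (1 - α) * Real.log (∑ i, p i ^ α)

lemma sum_rpow_pos {ι : Type*} {s : Finset ι} {x : ι → ℝ} (hx : ∀ i ∈ s, 0 ≤ x i)
    (hsum : 0 < ∑ i ∈ s, x i) (α : ℝ) : 0 < ∑ i ∈ s, x i ^ α := by
  obtain ⟨i, hi, hxi⟩ := exists_ne_zero_of_sum_ne_zero hsum.ne'
  exact sum_pos' (fun j hj => Real.rpow_nonneg (hx j hj) α)
    ⟨i, hi, Real.rpow_pos_of_pos ((hx i hi).lt_of_ne' hxi) α⟩

lemma renyiEntropy_le_renyiEntropy {ι κ : Type*} [Fintype ι] [Fintype κ] {α : ℝ}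
    {p : ι → ℝ} {q : κ → ℝ} (hp : ∀ i, 0 ≤ p i) (hq : ∀ l, 0 ≤ q l)
    (hpsum : 0 < ∑ i, p i) (hqsum : 0 < ∑ l, q l)
    (hlt : α < 1 → ∑ i, p i ^ α ≤ ∑ l, q l ^ α) (hgt : 1 < α → ∑ l, q l ^ α ≤ ∑ i, p i ^ α) :
    renyiEntropy α p ≤ renyiEntropy α q := by
  unfold renyiEntropy
  rcases lt_trichotomy α 1 with hα | rfl | hα
  · exact mul_le_mul_of_nonneg_left
      (Real.log_le_log (sum_rpow_pos (fun i _ => hp i) hpsum α) (hlt hα))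
      (one_div_nonneg.2 (sub_nonneg.2 hα.le))
  · simp
  · exact mul_le_mul_of_nonpos_left
      (Real.log_le_log (sum_rpow_pos (fun l _ => hq l) hqsum α) (hgt hα))
      (one_div_nonpos.2 (sub_nonpos.2 hα.le))

section WeightedMean

variable {ι : Type*} {s : Finset ι} {w z : ι → ℝ} {c α : ℝ}

lemma mul_sum_mul_rpow_le_rpow_mul_sum_mul (hw : ∀ i ∈ s, 0 ≤ w i) (hw1 : ∑ i ∈ s, w i = 1)
    (hz : ∀ i ∈ s, 0 ≤ z i) (hc0 : 0 ≤ c) (hc1 : c ≤ 1) (hα0 : 0 ≤ α) (hα1 : α ≤ 1) :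
    c * ∑ i ∈ s, w i * z i ^ α ≤ (c * ∑ i ∈ s, w i * z i) ^ α := by
  have jensen : ∑ i ∈ s, w i * z i ^ α ≤ (∑ i ∈ s, w i * z i) ^ α := by
    simpa only [smul_eq_mul] using (Real.concaveOn_rpow hα0 hα1).le_map_sum hw hw1 hz
  calc c * ∑ i ∈ s, w i * z i ^ α
      ≤ c ^ α * (∑ i ∈ s, w i * z i) ^ α :=
        mul_le_mul (Real.self_le_rpow_of_le_one hc0 hc1 hα1) jensen
          (sum_nonneg fun i hi => mul_nonneg (hw i hi) (Real.rpow_nonneg (hz i hi) α))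
          (Real.rpow_nonneg hc0 α)
    _ = (c * ∑ i ∈ s, w i * z i) ^ α :=
        (Real.mul_rpow hc0 (sum_nonneg fun i hi => mul_nonneg (hw i hi) (hz i hi))).symm

lemma rpow_mul_sum_mul_le_mul_sum_mul_rpow (hw : ∀ i ∈ s, 0 ≤ w i) (hw1 : ∑ i ∈ s, w i = 1)
    (hz : ∀ i ∈ s, 0 ≤ z i) (hc0 : 0 ≤ c) (hc1 : c ≤ 1) (hα : 1 ≤ α) :
    (c * ∑ i ∈ s, w i * z i) ^ α ≤ c * ∑ i ∈ s, w i * z i ^ α := by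
  have hsum : 0 ≤ ∑ i ∈ s, w i * z i := sum_nonneg fun i hi => mul_nonneg (hw i hi) (hz i hi)
  calc (c * ∑ i ∈ s, w i * z i) ^ α
      = c ^ α * (∑ i ∈ s, w i * z i) ^ α := Real.mul_rpow hc0 hsum
    _ ≤ c * ∑ i ∈ s, w i * z i ^ α :=
        mul_le_mul (Real.rpow_le_self_of_le_one hc0 hc1 hα)
          (Real.rpow_arith_mean_le_arith_mean_rpow s w z hw hw1 hz hα)
          (Real.rpow_nonneg hsum α) hc0

end WeightedMean

section ScaledStochastic

variable {ι κ : Type*} [Fintype ι] [Fintype κ] {c : κ → ℝ} {a : κ → ι → ℝ}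

lemma sum_mul_sum_mul_eq_sum (hcol : ∀ j, ∑ l, c l * a l j = 1) (f : ι → ℝ) :
    ∑ l, c l * ∑ j, a l j * f j = ∑ j, f j := by
  simp_rw [mul_sum, ← mul_assoc]
  rw [sum_comm]
  simp_rw [← sum_mul, hcol, one_mul]

variable (hc0 : ∀ l, 0 ≤ c l) (hc1 : ∀ l, c l ≤ 1) (ha : ∀ l j, 0 ≤ a l j)
  (hrow : ∀ l, ∑ j, a l j = 1) (hcol : ∀ j, ∑ l, c l * a l j = 1)
  {p : ι → ℝ} (hp : ∀ j, 0 ≤ p j)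
include hc0 hc1 ha hrow hcol hp

lemma sum_rpow_le_sum_rpow_scaled_stochastic {α : ℝ} (hα0 : 0 ≤ α) (hα1 : α ≤ 1) :
    ∑ j, p j ^ α ≤ ∑ l, (c l * ∑ j, a l j * p j) ^ α := by
  rw [← sum_mul_sum_mul_eq_sum hcol]
  exact sum_le_sum fun l _ => mul_sum_mul_rpow_le_rpow_mul_sum_mul (fun j _ => ha l j)
    (hrow l) (fun j _ => hp j) (hc0 l) (hc1 l) hα0 hα1

lemma sum_scaled_stochastic_rpow_le_sum_rpow {α : ℝ} (hα : 1 ≤ α) :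
    ∑ l, (c l * ∑ j, a l j * p j) ^ α ≤ ∑ j, p j ^ α := by
  rw [← sum_mul_sum_mul_eq_sum hcol]
  exact sum_le_sum fun l _ => rpow_mul_sum_mul_le_mul_sum_mul_rpow (fun j _ => ha l j)
    (hrow l) (fun j _ => hp j) (hc0 l) (hc1 l) hα

lemma renyiEntropy_le_renyiEntropy_scaled_stochastic (hp1 : ∑ j, p j = 1) {α : ℝ}
    (hα : 0 < α) : renyiEntropy α p ≤ renyiEntropy α fun l => c l * ∑ j, a l j * p j :=
  renyiEntropy_le_renyiEntropy hp
    (fun l => mul_nonneg (hc0 l) (sum_nonneg fun j _ => mul_nonneg (ha l j) (hp j)))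
    (by rw [hp1]; exact one_pos) (by rw [sum_mul_sum_mul_eq_sum hcol, hp1]; exact one_pos)
    (fun h => sum_rpow_le_sum_rpow_scaled_stochastic hc0 hc1 ha hrow hcol hp hα.le h.le)
    (fun h => sum_scaled_stochastic_rpow_le_sum_rpow hc0 hc1 ha hrow hcol hp h.le)

end ScaledStochastic

theorem measurement_renyi_entropy_ge_spectral_renyi_entropy_general
    {V : Type*} [NormedAddCommGroup V] [InnerProductSpace ℝ V]
    (u : V) (d N : ℕ) (ω : Fin d → V)
    (hωsum : (∑ j, ω j) = u) (hωn : ∀ j, ⟪u, ω j⟫ = 1)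
    (ν : Fin N → V) (c : Fin N → ℝ)
    (hc0 : ∀ l, 0 ≤ c l) (hc1 : ∀ l, c l ≤ 1)
    (hνn : ∀ l, ⟪u, ν l⟫ = 1)
    (hcsum : (∑ l, c l • ν l) = u)
    (hpos : ∀ l j, 0 ≤ ⟪ν l, ω j⟫)
    (p : Fin d → ℝ) (hp : ∀ j, 0 ≤ p j) (hp1 : (∑ j, p j) = 1)
    (q : Fin N → ℝ) (hq : ∀ l, q l = c l * ⟪ν l, (∑ j, p j • ω j)⟫) :
    ∀ α : ℝ, 0 < α → α ≠ 1 →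
      (1 / (1 - α)) * Real.log (∑ l, Real.rpow (q l) α)
        ≥ (1 / (1 - α)) * Real.log (∑ j, Real.rpow (p j) α) := by
  intro α hα _
  have hq' : q = fun l => c l * ∑ j, ⟪ν l, ω j⟫ * p j := by
    funext l
    simp only [hq, inner_sum, real_inner_smul_right, mul_comm]
  have hrow : ∀ l, ∑ j, ⟪ν l, ω j⟫ = 1 := fun l => by
    rw [← inner_sum, hωsum, real_inner_comm, hνn]
  have hcol : ∀ j, ∑ l, c l * ⟪ν l, ω j⟫ = 1 := fun j => by
    simp_rw [← real_inner_smul_left, ← sum_inner, hcsum, hωn]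
  subst hq'
  exact renyiEntropy_le_renyiEntropy_scaled_stochastic hc0 hc1 hpos hrow hcol hp hp1 hα

/-- Measurement Rényi entropy dominates spectral Rényi entropy (Theorem 7,
spectral form, Rényi case): for every `α ∈ (0,∞) \ {1}`, the order-α Rényi
entropy of the outcome probabilities of any fine-grained measurement on a
state is at least the order-α spectral Rényi entropy of the state. -/
theorem measurement_renyi_entropy_ge_spectral_renyi_entropy
    {V : Type*} [NormedAddCommGroup V] [InnerProductSpace ℝ V]
    (u : V) (d N : ℕ) (ω : Fin d → V)
    (hωsum : (∑ j, ω j) = u) (hωn : ∀ j, ⟪u, ω j⟫ = 1)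
    (ν : Fin N → V) (c : Fin N → ℝ)
    (hc0 : ∀ l, 0 ≤ c l) (hc1 : ∀ l, c l ≤ 1)
    (hνn : ∀ l, ⟪u, ν l⟫ = 1)
    (hcsum : (∑ l, c l • ν l) = u)
    (hpos : ∀ l j, 0 ≤ ⟪ν l, ω j⟫)
    (hd : 1 ≤ d)
    (p : Fin d → ℝ) (hp : ∀ j, 0 ≤ p j) (hp1 : (∑ j, p j) = 1)
    (q : Fin N → ℝ) (hq : ∀ l, q l = c l * ⟪ν l, (∑ j, p j • ω j)⟫) :
    ∀ α : ℝ, 0 < α → α ≠ 1 →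
      (1 / (1 - α)) * Real.log (∑ l, Real.rpow (q l) α)
        ≥ (1 / (1 - α)) * Real.log (∑ j, Real.rpow (p j) α) :=
  measurement_renyi_entropy_ge_spectral_renyi_entropy_general u d N ω hωsum hωn ν c hc0 hc1 hνn
    hcsum hpos p hp hp1 q hq
end

section
/- Decomposition Rényi-2 entropy equals spectral Rényi-2 entropy (core of Theorem 8, α = 2 case). Let V be a real inner product space and d, n ∈ ℕ. Let (ω_j)_{j ∈ Fin d} be an orthonormal family and (φ_k)_{k ∈ Fin n} a family of unit vectors (⟪φ_k, φ_k⟫ = 1) with ⟪φ_j, φ_k⟫ ≥ 0 for all j, k. Let p be a probability vector on Fin d and q a probability vector on Fin n with ∑ j, p j • ω_j = ∑ k, q k • φ_k. Then ∑ k, (q k)² ≤ ∑ j, (p j)². (Hence H₂(q) ≥ H₂(p), so the Rényi-2 entropy of any convex decomposition of a state into pure states is at least the spectral Rényi-2 entropy; this yields Š₂ = S₂.) -/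
/-!
Expanding the squared norm of the state in the two decompositions: the orthonormal one gives
exactly `∑ j, p j ^ 2`, while the pure-state one gives the double sum
`∑ k l, q k * q l * ⟪φ k, φ l⟫`, whose off-diagonal terms are nonnegative, so it dominates its
diagonal `∑ k, q k ^ 2`.
-/

open scoped RealInnerProductSpace

theorem sum_sq_mul_inner_self_le_inner_sum_smul {ι V : Type*} [Fintype ι]
    [NormedAddCommGroup V] [InnerProductSpace ℝ V] (φ : ι → V) (hφ : ∀ i j, 0 ≤ ⟪φ i, φ j⟫)
    (q : ι → ℝ) (hq : ∀ i, 0 ≤ q i) :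
    ∑ i, q i ^ 2 * ⟪φ i, φ i⟫ ≤ ⟪∑ i, q i • φ i, ∑ i, q i • φ i⟫ := by
  simp_rw [sum_inner, inner_sum, real_inner_smul_left, real_inner_smul_right]
  gcongr with i
  have hterm : ∀ j, 0 ≤ q i * (q j * ⟪φ i, φ j⟫) := fun j =>
    mul_nonneg (hq i) (mul_nonneg (hq j) (hφ i j))
  calc q i ^ 2 * ⟪φ i, φ i⟫ = q i * (q i * ⟪φ i, φ i⟫) := by ring
    _ ≤ ∑ j, q i * (q j * ⟪φ i, φ j⟫) :=
      Finset.single_le_sum (fun j _ => hterm j) (Finset.mem_univ i)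

theorem decomposition_renyi2_ge_spectral_general
    {V : Type*} [NormedAddCommGroup V] [InnerProductSpace ℝ V]
    (d n : ℕ) (ω : Fin d → V) (φ : Fin n → V)
    (hω : Orthonormal ℝ ω)
    (hφunit : ∀ k, ⟪φ k, φ k⟫ = 1)
    (hφpos : ∀ j k, 0 ≤ ⟪φ j, φ k⟫)
    (p : Fin d → ℝ)
    (q : Fin n → ℝ) (hq : ∀ k, 0 ≤ q k)
    (hpq : (∑ j, p j • ω j) = ∑ k, q k • φ k) :
    (∑ k, (q k) ^ 2) ≤ ∑ j, (p j) ^ 2 := by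
  calc ∑ k, q k ^ 2 = ∑ k, q k ^ 2 * ⟪φ k, φ k⟫ := by simp only [hφunit, mul_one]
    _ ≤ ⟪∑ k, q k • φ k, ∑ k, q k • φ k⟫ := sum_sq_mul_inner_self_le_inner_sum_smul φ hφpos q hq
    _ = ⟪∑ j, p j • ω j, ∑ j, p j • ω j⟫ := by rw [hpq]
    _ = ∑ j, p j ^ 2 := by simp only [hω.inner_sum, conj_trivial, sq]

/-- Decomposition Rényi-2 entropy equals spectral Rényi-2 entropy (core of
Theorem 8, α = 2 case): the coefficients of any decomposition of a state into
pure states have `∑ (q k)² ≤ ∑ (p j)²` where `p` are the spectral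
coefficients; hence `H₂(q) ≥ H₂(p)` and `Š₂ = S₂`. -/
theorem decomposition_renyi2_ge_spectral
    {V : Type*} [NormedAddCommGroup V] [InnerProductSpace ℝ V]
    (d n : ℕ) (ω : Fin d → V) (φ : Fin n → V)
    (hω : Orthonormal ℝ ω)
    (hφunit : ∀ k, ⟪φ k, φ k⟫ = 1)
    (hφpos : ∀ j k, 0 ≤ ⟪φ j, φ k⟫)
    (p : Fin d → ℝ) (hp : ∀ j, 0 ≤ p j) (hp1 : (∑ j, p j) = 1)
    (q : Fin n → ℝ) (hq : ∀ k, 0 ≤ q k) (hq1 : (∑ k, q k) = 1)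
    (hpq : (∑ j, p j • ω j) = ∑ k, q k • φ k) :
    (∑ k, (q k) ^ 2) ≤ ∑ j, (p j) ^ 2 :=
  decomposition_renyi2_ge_spectral_general d n ω φ hω hφunit hφpos p q hq hpq
end

section
/- Decomposition min-entropy equals spectral min-entropy (core of Theorem 8, α = ∞ case). Let V be a real inner product space and d, n ∈ ℕ with d ≥ 1 and n ≥ 1. Let (ω_j)_{j ∈ Fin d} be a family in V, set u := ∑ j, ω_j, and let (φ_k)_{k ∈ Fin n} be a family of unit vectors (⟪φ_k, φ_k⟫ = 1) satisfying ⟪φ_l, φ_k⟫ ≥ 0 for all l, k, and, for all j, k: 0 ≤ ⟪ω_j, φ_k⟫ ≤ 1 and ⟪u, φ_k⟫ = 1. Let p be a probability vector on Fin d and q a probability vector on Fin n with ∑ j, p j • ω_j = ∑ k, q k • φ_k. Then max_k q k ≤ max_j p j. (Hence H_∞(q) ≥ H_∞(p), so the min-entropy of any convex decomposition of a state into pure states is at least the spectral min-entropy; this yields Š_∞ = S_∞.) -/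
/-!
Pair the state with a pure state `φ k`. Since the pure states are unit vectors with
nonnegative mutual overlaps, the pairing with `∑ l, q l • φ l` is at least `q k`. Since the
frame effects `⟪ω j, φ k⟫` are nonnegative and sum to `⟪u, φ k⟫ = 1`, the pairing with
`∑ j, p j • ω j` is a weighted average of the `p j`, hence at most `max p`.
-/

open scoped RealInnerProductSpace
open Finset

section

variable {V ι : Type*} [NormedAddCommGroup V] [InnerProductSpace ℝ V] [Fintype ι]

theorem le_inner_sum_smul_of_inner_nonneg {φ : ι → V} {q : ι → ℝ} (hq : ∀ l, 0 ≤ q l)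
    {k : ι} (hk : ⟪φ k, φ k⟫ = 1) (hpos : ∀ l, 0 ≤ ⟪φ l, φ k⟫) :
    q k ≤ ⟪∑ l, q l • φ l, φ k⟫ := by
  rw [sum_inner]
  calc q k = ⟪q k • φ k, φ k⟫ := by rw [real_inner_smul_left, hk, mul_one]
    _ ≤ ∑ l, ⟪q l • φ l, φ k⟫ :=
      single_le_sum (f := fun l => ⟪q l • φ l, φ k⟫)
        (fun l _ => by rw [real_inner_smul_left]; exact mul_nonneg (hq l) (hpos l)) (mem_univ k)

theorem inner_sum_smul_le_of_le {ω : ι → V} {x : V} (h0 : ∀ j, 0 ≤ ⟪ω j, x⟫)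
    (h1 : ⟪∑ j, ω j, x⟫ = 1) {p : ι → ℝ} {M : ℝ} (hM : ∀ j, p j ≤ M) :
    ⟪∑ j, p j • ω j, x⟫ ≤ M :=
  calc ⟪∑ j, p j • ω j, x⟫ = ∑ j, p j * ⟪ω j, x⟫ := by
        simp only [sum_inner, real_inner_smul_left]
    _ ≤ ∑ j, M * ⟪ω j, x⟫ := sum_le_sum fun j _ => mul_le_mul_of_nonneg_right (hM j) (h0 j)
    _ = M := by rw [← mul_sum, ← sum_inner, h1, mul_one]

end

theorem decomposition_min_entropy_ge_spectral_general
    {V : Type*} [NormedAddCommGroup V] [InnerProductSpace ℝ V]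
    (d n : ℕ) (hd : 1 ≤ d) (hn : 1 ≤ n)
    (ω : Fin d → V) (u : V) (hu : u = ∑ j, ω j)
    (φ : Fin n → V)
    (hφunit : ∀ k, ⟪φ k, φ k⟫ = 1)
    (hφpos : ∀ l k, 0 ≤ ⟪φ l, φ k⟫)
    (hωφ0 : ∀ j k, 0 ≤ ⟪ω j, φ k⟫)
    (huφ : ∀ k, ⟪u, φ k⟫ = 1)
    (p : Fin d → ℝ)
    (q : Fin n → ℝ) (hq : ∀ k, 0 ≤ q k)
    (hpq : (∑ j, p j • ω j) = ∑ k, q k • φ k) :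
    Finset.univ.sup' (Finset.univ_nonempty_iff.mpr ⟨⟨0, hn⟩⟩) q
      ≤ Finset.univ.sup' (Finset.univ_nonempty_iff.mpr ⟨⟨0, hd⟩⟩) p := by
  subst hu
  refine sup'_le _ _ fun k _ => ?_
  calc q k ≤ ⟪∑ l, q l • φ l, φ k⟫ :=
        le_inner_sum_smul_of_inner_nonneg hq (hφunit k) (hφpos · k)
    _ = ⟪∑ j, p j • ω j, φ k⟫ := by rw [hpq]
    _ ≤ _ := inner_sum_smul_le_of_le (hωφ0 · k) (huφ k) fun j => le_sup' p (mem_univ j)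

/-- Decomposition min-entropy equals spectral min-entropy (core of Theorem 8,
α = ∞ case): the largest coefficient of any decomposition of a state into pure
states is at most the largest spectral coefficient, hence `H_∞(q) ≥ H_∞(p)`
and `Š_∞ = S_∞`. -/
theorem decomposition_min_entropy_ge_spectral
    {V : Type*} [NormedAddCommGroup V] [InnerProductSpace ℝ V]
    (d n : ℕ) (hd : 1 ≤ d) (hn : 1 ≤ n)
    (ω : Fin d → V) (u : V) (hu : u = ∑ j, ω j)
    (φ : Fin n → V)
    (hφunit : ∀ k, ⟪φ k, φ k⟫ = 1)
    (hφpos : ∀ l k, 0 ≤ ⟪φ l, φ k⟫)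
    (hωφ0 : ∀ j k, 0 ≤ ⟪ω j, φ k⟫) (hωφ1 : ∀ j k, ⟪ω j, φ k⟫ ≤ 1)
    (huφ : ∀ k, ⟪u, φ k⟫ = 1)
    (p : Fin d → ℝ) (hp : ∀ j, 0 ≤ p j) (hp1 : (∑ j, p j) = 1)
    (q : Fin n → ℝ) (hq : ∀ k, 0 ≤ q k) (hq1 : (∑ k, q k) = 1)
    (hpq : (∑ j, p j • ω j) = ∑ k, q k • φ k) :
    Finset.univ.sup' (Finset.univ_nonempty_iff.mpr ⟨⟨0, hn⟩⟩) q
      ≤ Finset.univ.sup' (Finset.univ_nonempty_iff.mpr ⟨⟨0, hd⟩⟩) p :=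
  decomposition_min_entropy_ge_spectral_general d n hd hn ω u hu φ hφunit hφpos hωφ0 huφ p q hq hpq
end

section
/- The gbit admits no consistent thermodynamic entropy. Let Ω := {v : Fin 3 → ℝ | v 0 = 1 ∧ 0 ≤ v 1 ∧ v 1 ≤ 1 ∧ 0 ≤ v 2 ∧ v 2 ≤ 1} (the square/gbit state space), and call ω, ω' ∈ Ω perfectly distinguishable if there exists a linear map e : (Fin 3 → ℝ) →ₗ[ℝ] ℝ with 0 ≤ e σ ≤ 1 for all σ ∈ Ω, e ω = 1 and e ω' = 0. Then there is no function H : (Fin 3 → ℝ) → ℝ such that for all perfectly distinguishable ω, ω' ∈ Ω and all p with 0 < p < 1: H (p • ω + (1 − p) • ω') = p · H ω + (1 − p) · H ω' − p · log p − (1 − p) · log (1 − p). -/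
/-!
Splitting the centre of the square into two perfectly distinguishable halves can be done
along either diagonal, or along the line joining the midpoints of two opposite edges (each of
which splits again into two corners). The mixing rule charges `log 2` per split, so the two
routes from the centre down to the four corners cost `log 2` and `2 log 2` respectively, while
ending at the same average of the corner entropies.
-/

/-- The gbit (square) state space: vectors `v : Fin 3 → ℝ` with `v 0 = 1`
(normalization) and fiducial probabilities `v 1, v 2 ∈ [0,1]`. -/
def gbitStates : Set (Fin 3 → ℝ) :=
  {v | v 0 = 1 ∧ 0 ≤ v 1 ∧ v 1 ≤ 1 ∧ 0 ≤ v 2 ∧ v 2 ≤ 1}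

/-- Two gbit states are perfectly distinguishable if some effect (a linear
functional taking values in `[0,1]` on all states) is `1` on the first and
`0` on the second. -/
def gbitPerfectlyDistinguishable (ω ω' : Fin 3 → ℝ) : Prop :=
  ∃ e : (Fin 3 → ℝ) →ₗ[ℝ] ℝ,
    (∀ σ ∈ gbitStates, 0 ≤ e σ ∧ e σ ≤ 1) ∧ e ω = 1 ∧ e ω' = 0

open Real Set

lemma vecCons_one_mem_gbitStates {x y : ℝ} (hx : x ∈ Icc 0 1) (hy : y ∈ Icc 0 1) :
    ![1, x, y] ∈ gbitStates :=
  ⟨rfl, hx.1, hx.2, hy.1, hy.2⟩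

lemma apply_mem_Icc_of_mem_gbitStates {σ : Fin 3 → ℝ} (hσ : σ ∈ gbitStates) {i : Fin 3}
    (hi : i ≠ 0) : σ i ∈ Icc 0 1 := by
  obtain ⟨-, one_mem, one_mem', h2, h2'⟩ := hσ
  fin_cases i
  exacts [absurd rfl hi, ⟨one_mem, one_mem'⟩, ⟨h2, h2'⟩]

lemma gbitPerfectlyDistinguishable_of_apply {ω ω' : Fin 3 → ℝ} {i : Fin 3} (hi : i ≠ 0)
    (hω : ω i = 1) (hω' : ω' i = 0) : gbitPerfectlyDistinguishable ω ω' :=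
  ⟨LinearMap.proj i, fun _ hσ => apply_mem_Icc_of_mem_gbitStates hσ hi, hω, hω'⟩

def IsGbitEntropy (H : (Fin 3 → ℝ) → ℝ) : Prop :=
  ∀ ω ∈ gbitStates, ∀ ω' ∈ gbitStates,
    gbitPerfectlyDistinguishable ω ω' →
      ∀ p : ℝ, 0 < p → p < 1 →
        H (p • ω + (1 - p) • ω')
          = p * H ω + (1 - p) * H ω' - p * log p - (1 - p) * log (1 - p)

lemma IsGbitEntropy.apply_midpoint {H : (Fin 3 → ℝ) → ℝ} (hH : IsGbitEntropy H)
    {x y x' y' : ℝ} (hx : x ∈ Icc 0 1) (hy : y ∈ Icc 0 1) (hx' : x' ∈ Icc 0 1)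
    (hy' : y' ∈ Icc 0 1) (hd : gbitPerfectlyDistinguishable ![1, x, y] ![1, x', y']) :
    H ![1, (x + x') / 2, (y + y') / 2] = (H ![1, x, y] + H ![1, x', y']) / 2 + log 2 := by
  have hmid : (1 / 2 : ℝ) • ![1, x, y] + (1 - 1 / 2 : ℝ) • ![1, x', y']
      = ![1, (x + x') / 2, (y + y') / 2] := by
    ext i
    fin_cases i <;> simp <;> ring
  have rule := hH _ (vecCons_one_mem_gbitStates hx hy) _ (vecCons_one_mem_gbitStates hx' hy') hd
    (1 / 2) (by norm_num) (by norm_num)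
  rw [hmid, show (1 - 1 / 2 : ℝ) = 1 / 2 by norm_num, one_div, log_inv] at rule
  linarith

theorem not_isGbitEntropy (H : (Fin 3 → ℝ) → ℝ) : ¬ IsGbitEntropy H := by
  intro hH
  have zero_mem : (0 : ℝ) ∈ Icc 0 1 := left_mem_Icc.2 zero_le_one
  have one_mem : (1 : ℝ) ∈ Icc 0 1 := right_mem_Icc.2 zero_le_one
  have half_mem : (1 / 2 : ℝ) ∈ Icc 0 1 := ⟨by norm_num, by norm_num⟩
  have h₁ : (1 : Fin 3) ≠ 0 := by decide
  have h₂ : (2 : Fin 3) ≠ 0 := by decide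
  have bottom := hH.apply_midpoint one_mem zero_mem zero_mem zero_mem
    (gbitPerfectlyDistinguishable_of_apply h₁ rfl rfl)
  have top := hH.apply_midpoint one_mem one_mem zero_mem one_mem
    (gbitPerfectlyDistinguishable_of_apply h₁ rfl rfl)
  have vertical := hH.apply_midpoint half_mem one_mem half_mem zero_mem
    (gbitPerfectlyDistinguishable_of_apply h₂ rfl rfl)
  have diagonal := hH.apply_midpoint one_mem one_mem zero_mem zero_mem
    (gbitPerfectlyDistinguishable_of_apply h₁ rfl rfl)
  have antidiagonal := hH.apply_midpoint one_mem zero_mem zero_mem one_mem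
    (gbitPerfectlyDistinguishable_of_apply h₁ rfl rfl)
  norm_num at bottom top vertical diagonal antidiagonal
  linarith [log_pos (one_lt_two : (1 : ℝ) < 2)]

/-- The gbit admits no consistent thermodynamic entropy: no function `H` on
states satisfies Petz's mixing rule for all decompositions into perfectly
distinguishable states. -/
theorem gbit_admits_no_entropy :
    ¬ ∃ H : (Fin 3 → ℝ) → ℝ,
      ∀ ω ∈ gbitStates, ∀ ω' ∈ gbitStates,
        gbitPerfectlyDistinguishable ω ω' →
          ∀ p : ℝ, 0 < p → p < 1 →
            H (p • ω + (1 - p) • ω')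
              = p * H ω + (1 - p) * H ω'
                - p * Real.log p - (1 - p) * Real.log (1 - p) :=
  fun ⟨H, hH⟩ => not_isGbitEntropy H hH
end

section
/- Mutual orthogonality of the projectors of an instrument (appendix Lemma 'ProjectorsOrthogonal'). Let V be a finite-dimensional real vector space, C ⊆ V a convex cone whose linear span is all of V, and u : V →ₗ[ℝ] ℝ a linear functional with u x > 0 for every x ∈ C with x ≠ 0. Let P_1, …, P_n : V →ₗ[ℝ] V be linear maps such that P_j ∘ P_j = P_j and P_j '' C ⊆ C for every j, and ∑ j, u (P_j x) = u x for all x ∈ V. Then P_k ∘ P_j = 0 for all j ≠ k. -/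
/-!
For `x ∈ C` the state `y = P j x` lies in `C` and is fixed by `P j`, so normalization gives
`u y + ∑_{i ≠ j} u (P i y) = u y`. Every summand is `≥ 0` since `P i y ∈ C`, hence
`u (P k y) = 0`, and strict positivity of `u` on `C` forces `P k y = 0`. As `C` spans `V`,
this gives `P k ∘ P j = 0`.
-/

section

variable {V : Type*} [AddCommGroup V] [Module ℝ V] {C : Set V} {u : V →ₗ[ℝ] ℝ}

lemma nonneg_of_pos_on_cone (hu : ∀ x ∈ C, x ≠ 0 → 0 < u x) {x : V} (hx : x ∈ C) :
    0 ≤ u x := by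
  rcases eq_or_ne x 0 with rfl | hne
  · simp
  · exact (hu x hx hne).le

lemma eq_zero_of_mem_cone_of_apply_nonpos (hu : ∀ x ∈ C, x ≠ 0 → 0 < u x) {x : V}
    (hx : x ∈ C) (hux : u x ≤ 0) : x = 0 := by
  by_contra hne
  exact (hu x hx hne).not_ge hux

lemma apply_eq_zero_of_mem_cone_of_apply_eq_self (hu : ∀ x ∈ C, x ≠ 0 → 0 < u x)
    {ι : Type*} [Fintype ι] {P : ι → V →ₗ[ℝ] V} (hP : ∀ i, ∀ x ∈ C, P i x ∈ C)
    (hnorm : ∀ x : V, ∑ i, u (P i x) = u x) {y : V} (hy : y ∈ C) {j k : ι}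
    (hfix : P j y = y) (hjk : j ≠ k) : P k y = 0 := by
  have hle : u (P j y) + u (P k y) ≤ u y := hnorm y ▸
    Finset.add_le_sum (fun i _ => nonneg_of_pos_on_cone hu (hP i y hy))
      (Finset.mem_univ j) (Finset.mem_univ k) hjk
  rw [hfix] at hle
  exact eq_zero_of_mem_cone_of_apply_nonpos hu (hP k y hy) (by linarith)

end

theorem instrument_projectors_orthogonal_general
    {V : Type*} [AddCommGroup V] [Module ℝ V]
    (C : Set V)
    (hspan : Submodule.span ℝ C = ⊤)
    (u : V →ₗ[ℝ] ℝ) (hu : ∀ x ∈ C, x ≠ 0 → 0 < u x)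
    (n : ℕ) (P : Fin n → V →ₗ[ℝ] V)
    (hidem : ∀ j, (P j) ∘ₗ (P j) = P j)
    (hposmap : ∀ j, ∀ x ∈ C, P j x ∈ C)
    (hnorm : ∀ x : V, (∑ j, u (P j x)) = u x) :
    ∀ j k, j ≠ k → (P k) ∘ₗ (P j) = 0 := by
  intro j k hjk
  refine LinearMap.ext_on hspan fun x hx => ?_
  have hfix : P j (P j x) = P j x := LinearMap.congr_fun (hidem j) x
  exact apply_eq_zero_of_mem_cone_of_apply_eq_self hu hposmap hnorm (hposmap j x hx) hfix hjk

/-- Mutual orthogonality of the projectors of an instrument (appendix Lemma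
'ProjectorsOrthogonal'): idempotent positive maps whose induced effects sum to
the (strictly positive on the spanning cone) normalization functional are
mutually orthogonal. -/
theorem instrument_projectors_orthogonal
    {V : Type*} [AddCommGroup V] [Module ℝ V] [FiniteDimensional ℝ V]
    (C : Set V) (hconv : Convex ℝ C)
    (hcone : ∀ (r : ℝ), 0 < r → ∀ x ∈ C, r • x ∈ C)
    (hspan : Submodule.span ℝ C = ⊤)
    (u : V →ₗ[ℝ] ℝ) (hu : ∀ x ∈ C, x ≠ 0 → 0 < u x)
    (n : ℕ) (P : Fin n → V →ₗ[ℝ] V)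
    (hidem : ∀ j, (P j) ∘ₗ (P j) = P j)
    (hposmap : ∀ j, ∀ x ∈ C, P j x ∈ C)
    (hnorm : ∀ x : V, (∑ j, u (P j x)) = u x) :
    ∀ j k, j ≠ k → (P k) ∘ₗ (P j) = 0 :=
  instrument_projectors_orthogonal_general C hspan u hu n P hidem hposmap hnorm
end

section
/- A positive projection onto the span of a face maps the cone into the face (appendix lemma). Let V be a real vector space, C ⊆ V a convex cone with C ∩ (−C) ⊆ {0} (pointed), and F ⊆ C a nonempty convex extreme subset of C (IsExtreme ℝ C F) with 0 ∈ F. Let P : V →ₗ[ℝ] V be a linear map such that P '' C ⊆ C, P x = x for every x ∈ Submodule.span ℝ F, and the range of P is contained in Submodule.span ℝ F. Then P ω ∈ F for every ω ∈ C. (In particular, F = Submodule.span ℝ F ∩ C.) -/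
/-!
A convex extreme subset `F ∋ 0` of a cone `C` is itself a cone: for `r > 1`, a point `x ∈ F`
lies on the open segment from `0` to `r • x`. Hence `span F = F - F`, and if `x ∈ C ∩ span F`
is written `x = a - b` with `a, b ∈ F`, then `x + b = a ∈ F` with `x, b ∈ C`, so extremality
puts `x` in `F`. Apply this to `x = P ω`, which lies in `C` by positivity of `P` and in
`span F` by the range condition.
-/

namespace PointedCone

variable {R E : Type*} [Ring R] [LinearOrder R] [IsOrderedRing R] [AddCommGroup E] [Module R E]

theorem mem_span_iff_exists_sub {K : PointedCone R E} {x : E} :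
    x ∈ Submodule.span R (K : Set E) ↔ ∃ a ∈ K, ∃ b ∈ K, a - b = x := by
  refine ⟨fun hx ↦ ?_, fun ⟨a, ha, b, hb, hab⟩ ↦
    hab ▸ sub_mem (Submodule.subset_span ha) (Submodule.subset_span hb)⟩
  induction hx using Submodule.span_induction with
  | mem y hy => exact ⟨y, hy, 0, K.zero_mem, sub_zero y⟩
  | zero => exact ⟨0, K.zero_mem, 0, K.zero_mem, sub_zero 0⟩
  | add y z _ _ hy hz =>
    obtain ⟨a, ha, b, hb, rfl⟩ := hy
    obtain ⟨a', ha', b', hb', rfl⟩ := hz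
    exact ⟨a + a', K.add_mem ha ha', b + b', K.add_mem hb hb', add_sub_add_comm ..⟩
  | smul c y _ hy =>
    obtain ⟨a, ha, b, hb, rfl⟩ := hy
    rcases le_total 0 c with hc | hc
    · exact ⟨c • a, K.smul_mem hc ha, c • b, K.smul_mem hc hb, (smul_sub c a b).symm⟩
    · refine ⟨(-c) • b, K.smul_mem (neg_nonneg.2 hc) hb, (-c) • a,
        K.smul_mem (neg_nonneg.2 hc) ha, ?_⟩
      rw [neg_smul, neg_smul, neg_sub_neg, smul_sub]

end PointedCone

namespace IsExtreme

variable {𝕜 E : Type*} [Field 𝕜] [LinearOrder 𝕜] [IsStrictOrderedRing 𝕜]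
  [AddCommGroup E] [Module 𝕜 E] {C F : Set E}

theorem smul_mem (hcone : ∀ r : 𝕜, 0 < r → ∀ x ∈ C, r • x ∈ C) (hFC : IsExtreme 𝕜 C F)
    (hFconv : Convex 𝕜 F) (h0F : (0 : E) ∈ F) {r : 𝕜} (hr : 0 ≤ r) {x : E} (hx : x ∈ F) :
    r • x ∈ F := by
  rcases le_or_gt r 1 with hr1 | hr1
  · exact hFconv.smul_mem_of_zero_mem h0F hx ⟨hr, hr1⟩
  have hr0 : 0 < r := zero_lt_one.trans hr1
  refine hFC.right_mem_of_mem_openSegment (hFC.subset h0F) (hcone r hr0 x (hFC.subset hx)) hx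
    ⟨1 - r⁻¹, r⁻¹, ?_, ?_, ?_, ?_⟩
  · exact sub_pos.2 (inv_lt_one_of_one_lt₀ hr1)
  · positivity
  · ring
  · rw [smul_zero, zero_add, smul_smul, inv_mul_cancel₀ hr0.ne', one_smul]

theorem add_mem (hcone : ∀ r : 𝕜, 0 < r → ∀ x ∈ C, r • x ∈ C) (hFC : IsExtreme 𝕜 C F)
    (hFconv : Convex 𝕜 F) (h0F : (0 : E) ∈ F) {x y : E} (hx : x ∈ F) (hy : y ∈ F) :
    x + y ∈ F := by
  have hmid : (2 : 𝕜)⁻¹ • x + (2 : 𝕜)⁻¹ • y ∈ F :=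
    hFconv hx hy (by positivity) (by positivity) (by ring)
  convert hFC.smul_mem hcone hFconv h0F zero_le_two hmid using 1
  rw [smul_add, smul_smul, smul_smul, mul_inv_cancel₀ two_ne_zero, one_smul, one_smul]

def toPointedCone (hcone : ∀ r : 𝕜, 0 < r → ∀ x ∈ C, r • x ∈ C) (hFC : IsExtreme 𝕜 C F)
    (hFconv : Convex 𝕜 F) (h0F : (0 : E) ∈ F) : PointedCone 𝕜 E :=
  .ofConeComb F ⟨0, h0F⟩ fun _ hx _ hy _ ha _ hb ↦ hFC.add_mem hcone hFconv h0F
    (hFC.smul_mem hcone hFconv h0F ha hx) (hFC.smul_mem hcone hFconv h0F hb hy)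

theorem mem_of_add_mem (hcone : ∀ r : 𝕜, 0 < r → ∀ x ∈ C, r • x ∈ C) (hFC : IsExtreme 𝕜 C F)
    (hFconv : Convex 𝕜 F) (h0F : (0 : E) ∈ F) {x y : E} (hx : x ∈ C) (hy : y ∈ C)
    (hxy : x + y ∈ F) : x ∈ F := by
  -- `x + y` is the midpoint of `2 • x` and `2 • y`
  have h2x : (2 : 𝕜) • x ∈ F := by
    refine hFC.left_mem_of_mem_openSegment (hcone 2 two_pos x hx) (hcone 2 two_pos y hy) hxy
      ⟨2⁻¹, 2⁻¹, by positivity, by positivity, by ring, ?_⟩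
    rw [smul_smul, smul_smul, inv_mul_cancel₀ two_ne_zero, one_smul, one_smul]
  simpa [smul_smul] using hFC.smul_mem hcone hFconv h0F (r := 2⁻¹) (by positivity) h2x

theorem mem_of_mem_span (hcone : ∀ r : 𝕜, 0 < r → ∀ x ∈ C, r • x ∈ C) (hFC : IsExtreme 𝕜 C F)
    (hFconv : Convex 𝕜 F) (h0F : (0 : E) ∈ F) {x : E} (hxF : x ∈ Submodule.span 𝕜 F)
    (hxC : x ∈ C) : x ∈ F := by
  obtain ⟨a, ha, b, hb, rfl⟩ :=
    PointedCone.mem_span_iff_exists_sub (K := hFC.toPointedCone hcone hFconv h0F) |>.1 hxF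
  exact hFC.mem_of_add_mem hcone hFconv h0F hxC (hFC.subset hb) (by rwa [sub_add_cancel])

end IsExtreme

theorem positive_projection_maps_cone_into_face_general
    {V : Type*} [AddCommGroup V] [Module ℝ V]
    (C : Set V)
    (hcone : ∀ (r : ℝ), 0 < r → ∀ x ∈ C, r • x ∈ C)
    (F : Set V) (hFconv : Convex ℝ F)
    (hFext : IsExtreme ℝ C F) (h0F : (0 : V) ∈ F)
    (P : V →ₗ[ℝ] V)
    (hPC : P '' C ⊆ C)
    (hPrange : LinearMap.range P ≤ Submodule.span ℝ F) :
    ∀ ω ∈ C, P ω ∈ F := fun ω hω ↦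
  hFext.mem_of_mem_span hcone hFconv h0F (hPrange ⟨ω, rfl⟩) (hPC ⟨ω, hω, rfl⟩)

/-- A positive projection onto the span of a face maps the cone into the face
(appendix lemma): if `C` is a pointed convex cone, `F` a nonempty convex
extreme subset of `C` containing `0`, and `P` a linear map preserving `C`,
fixing `span F`, and with range contained in `span F`, then `P` maps `C`
into `F`. -/
theorem positive_projection_maps_cone_into_face
    {V : Type*} [AddCommGroup V] [Module ℝ V]
    (C : Set V) (hconv : Convex ℝ C)
    (hcone : ∀ (r : ℝ), 0 < r → ∀ x ∈ C, r • x ∈ C)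
    (hpointed : C ∩ (-C) ⊆ {0})
    (F : Set V) (hFne : F.Nonempty) (hFconv : Convex ℝ F)
    (hFext : IsExtreme ℝ C F) (h0F : (0 : V) ∈ F)
    (P : V →ₗ[ℝ] V)
    (hPC : P '' C ⊆ C)
    (hPfix : ∀ x ∈ Submodule.span ℝ F, P x = x)
    (hPrange : LinearMap.range P ≤ Submodule.span ℝ F) :
    ∀ ω ∈ C, P ω ∈ F :=
  positive_projection_maps_cone_into_face_general C hcone F hFconv hFext h0F P hPC hPrange
end

section
/- Frame measurements are fine-grained (appendix Lemma 'PerfectlyDistinguishingAndFineGrained'). Assume the self-dual cone setup below. Let (ω_j)_{j ∈ Fin d} be pure states (extreme points of Ω) with ∑ j, ω_j = u. Then the measurement with effects e_j := ω_j is fine-grained: every refinement of it is trivial. -/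
open scoped RealInnerProductSpace

variable {V : Type*} [NormedAddCommGroup V] [InnerProductSpace ℝ V]

/-- A measurement: a finite family of effects (elements of the self-dual cone
`C`, acting on states via the inner product) summing to the order unit `u`. -/
def IsMeasurement (C : Set V) (u : V) {n : ℕ} (e : Fin n → V) : Prop :=
  (∀ i, e i ∈ C) ∧ (∑ i, e i) = u

/-- `(e', M)` is a refinement of the measurement `e`: `e'` is a measurement
and the effects of `e'` grouped according to `M` reproduce the effects of
`e`. -/
def IsRefinementOf (C : Set V) (u : V) {n m : ℕ}
    (e' : Fin m → V) (M : Fin m → Fin n) (e : Fin n → V) : Prop :=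
  IsMeasurement C u e' ∧
    ∀ i, (∑ a ∈ Finset.univ.filter (fun a => M a = i), e' a) = e i

/-- A refinement is trivial if each refined effect is a nonnegative multiple
of the effect it refines. -/
def IsTrivialRefinement {n m : ℕ} (e' : Fin m → V) (M : Fin m → Fin n)
    (e : Fin n → V) : Prop :=
  ∀ a, ∃ c : ℝ, 0 ≤ c ∧ e' a = c • e (M a)

/-- A measurement is fine-grained if all of its refinements are trivial. -/
def IsFineGrained (C : Set V) (u : V) {n : ℕ} (e : Fin n → V) : Prop :=
  IsMeasurement C u e ∧
    ∀ (m : ℕ) (e' : Fin m → V) (M : Fin m → Fin n),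
      IsRefinementOf C u e' M e → IsTrivialRefinement e' M e

/-!
If a sub-effect `x` of a pure state `p` is split off, `p = x + y` with `x, y` in the cone, then
normalising `x` and `y` by their values under `u` writes `p` as a proper convex combination of two
states. Extremality forces both to equal `p`, so `x` is a multiple of `p`. Applied to one effect of
a refinement and the sum of the other effects grouped with it, this makes every refinement trivial.
-/

section Cone

variable {C : Set V} (hconv : Convex ℝ C) (hcone : ∀ r : ℝ, 0 ≤ r → ∀ x ∈ C, r • x ∈ C)
include hconv hcone

theorem add_mem_of_convex_of_smul_mem {x y : V} (hx : x ∈ C) (hy : y ∈ C) : x + y ∈ C := by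
  have hmid : (2 : ℝ)⁻¹ • x + (2 : ℝ)⁻¹ • y ∈ C :=
    hconv hx hy (by norm_num) (by norm_num) (by norm_num)
  simpa [smul_add, smul_smul] using hcone 2 zero_le_two _ hmid

theorem sum_mem_of_convex_of_smul_mem (hC : C.Nonempty) {ι : Type*} {s : Finset ι} {f : ι → V}
    (hf : ∀ i ∈ s, f i ∈ C) : ∑ i ∈ s, f i ∈ C := by
  obtain ⟨z, hz⟩ := hC
  have hzero : (0 : V) ∈ C := by simpa using hcone 0 le_rfl z hz
  exact Finset.sum_induction f (· ∈ C) (fun _ _ ↦ add_mem_of_convex_of_smul_mem hconv hcone)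
    hzero hf

end Cone

section StateSpace

variable {C : Set V} {u : V} (hu : ∀ x ∈ C, x ≠ 0 → 0 < ⟪u, x⟫)
include hu

theorem inner_nonneg_of_mem {x : V} (hx : x ∈ C) : 0 ≤ ⟪u, x⟫ := by
  rcases eq_or_ne x 0 with rfl | hx0
  · simp
  · exact (hu x hx hx0).le

variable (hcone : ∀ r : ℝ, 0 ≤ r → ∀ x ∈ C, r • x ∈ C)
include hcone

theorem inv_inner_smul_mem_states {x : V} (hx : x ∈ C) (hx0 : x ≠ 0) :
    ⟪u, x⟫⁻¹ • x ∈ {z ∈ C | ⟪u, z⟫ = 1} :=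
  ⟨hcone _ (inv_nonneg.2 (hu x hx hx0).le) x hx,
    by rw [real_inner_smul_right, inv_mul_cancel₀ (hu x hx hx0).ne']⟩

theorem eq_inner_smul_of_add_eq_extremePoint {p x y : V}
    (hp : p ∈ Set.extremePoints ℝ {z ∈ C | ⟪u, z⟫ = 1})
    (hx : x ∈ C) (hy : y ∈ C) (hxy : x + y = p) : x = ⟪u, x⟫ • p := by
  rcases eq_or_ne x 0 with rfl | hx0
  · simp
  rcases eq_or_ne y 0 with rfl | hy0
  · rw [add_zero] at hxy
    rw [hxy, hp.1.2, one_smul]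
  have ht := hu x hx hx0
  have hs := hu y hy hy0
  have hts : ⟪u, x⟫ + ⟪u, y⟫ = 1 := by rw [← inner_add_right, hxy, hp.1.2]
  have hseg : p ∈ openSegment ℝ (⟪u, x⟫⁻¹ • x) (⟪u, y⟫⁻¹ • y) :=
    ⟨⟪u, x⟫, ⟪u, y⟫, ht, hs, hts, by
      rw [smul_smul, smul_smul, mul_inv_cancel₀ ht.ne', mul_inv_cancel₀ hs.ne', one_smul,
        one_smul, hxy]⟩
  have hxp : ⟪u, x⟫⁻¹ • x = p :=
    hp.2 (inv_inner_smul_mem_states hu hcone hx hx0) (inv_inner_smul_mem_states hu hcone hy hy0)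
      hseg
  rw [← hxp, smul_smul, mul_inv_cancel₀ ht.ne', one_smul]

end StateSpace

theorem frame_measurement_is_finegrained_general
    (C : Set V) (hconv : Convex ℝ C)
    (hcone : ∀ (r : ℝ), 0 ≤ r → ∀ x ∈ C, r • x ∈ C)
    (u : V) (hu : ∀ x ∈ C, x ≠ 0 → 0 < ⟪u, x⟫)
    (Ω : Set V) (hΩ : Ω = {ω ∈ C | ⟪u, ω⟫ = 1})
    (d : ℕ) (ω : Fin d → V)
    (hpure : ∀ j, ω j ∈ Set.extremePoints ℝ Ω)
    (hsum : (∑ j, ω j) = u) :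
    IsFineGrained C u ω := by
  subst hΩ
  refine ⟨⟨fun j ↦ (hpure j).1.1, hsum⟩, ?_⟩
  rintro m e' M ⟨⟨he'C, -⟩, hgroup⟩ a
  set others := (Finset.univ.filter (fun b ↦ M b = M a)).erase a
  have hsplit : e' a + ∑ b ∈ others, e' b = ω (M a) := by
    rw [Finset.add_sum_erase _ _ (by simp)]
    exact hgroup (M a)
  have hothers : ∑ b ∈ others, e' b ∈ C :=
    sum_mem_of_convex_of_smul_mem hconv hcone ⟨_, he'C a⟩ fun b _ ↦ he'C b
  exact ⟨⟪u, e' a⟫, inner_nonneg_of_mem hu (he'C a),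
    eq_inner_smul_of_add_eq_extremePoint hu hcone (hpure (M a)) (he'C a) hothers hsplit⟩

/-- Frame measurements are fine-grained (appendix Lemma
'PerfectlyDistinguishingAndFineGrained'): the measurement whose effects are
the members of a frame of pure states summing to `u` is fine-grained. -/
theorem frame_measurement_is_finegrained
    [FiniteDimensional ℝ V]
    (C : Set V) (hclosed : IsClosed C) (hconv : Convex ℝ C)
    (hcone : ∀ (r : ℝ), 0 ≤ r → ∀ x ∈ C, r • x ∈ C)
    (hself : C = {x : V | ∀ y ∈ C, 0 ≤ ⟪x, y⟫})
    (u : V) (huC : u ∈ C) (hu : ∀ x ∈ C, x ≠ 0 → 0 < ⟪u, x⟫)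
    (Ω : Set V) (hΩ : Ω = {ω ∈ C | ⟪u, ω⟫ = 1})
    (d : ℕ) (ω : Fin d → V)
    (hpure : ∀ j, ω j ∈ Set.extremePoints ℝ Ω)
    (hsum : (∑ j, ω j) = u) :
    IsFineGrained C u ω :=
  frame_measurement_is_finegrained_general C hconv hcone u hu Ω hΩ d ω hpure hsum
end

section
/- Bistochasticity of fine-grained measurement statistics (appendix Lemma 'Bistochastic'). Let V be a real inner product space, u ∈ V, and d, N ∈ ℕ. Let (ω_j)_{j ∈ Fin d} satisfy ∑ j, ω_j = u and ⟪u, ω_j⟫ = 1 for all j. Let (ν_l)_{l ∈ Fin N} and c : Fin N → ℝ satisfy 0 ≤ c l ≤ 1, ⟪u, ν_l⟫ = 1, ∑ l, c l • ν_l = u, and ⟪ν_l, ω_j⟫ ≥ 0 for all l, j. Then d ≤ N, and for every probability vector p on Fin d there exists an N × N matrix M with nonnegative entries, all of whose rows and columns sum to 1 (M doubly stochastic), such that, setting ω := ∑ j, p j • ω_j and q l := c l · ⟪ν_l, ω⟫, one has q l = ∑ j, M l j · p̂ j for all l, where p̂ : Fin N → ℝ is p extended by zeros. -/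
open scoped RealInnerProductSpace

/-!
The matrix `A l j = c l * ⟪ν l, ω j⟫` is nonnegative, its columns sum to `⟪u, ω j⟫ = 1` and its
rows to `c l * ⟪ν l, u⟫ = c l ≤ 1`. Counting its total mass by columns and by rows gives
`d ≤ N`. The row deficits `1 - c l` add up to `N - d`, so spreading each of them evenly over
`N - d` new columns completes `A` to a doubly stochastic matrix; these new columns only ever
meet the zeros of the zero-extended spectral vector, so the outcome statistics `q = A p` are
unchanged.
-/

open Finset Matrix

def zeroExtend {d N : ℕ} (x : Fin d → ℝ) : Fin N → ℝ :=
  fun j => if h : (j : ℕ) < d then x ⟨j, h⟩ else 0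

theorem sum_univ_add_dite_lt {α : Type*} [AddCommMonoid α] {d k : ℕ} (f : Fin d → α)
    (g : Fin (d + k) → α) :
    ∑ j : Fin (d + k), (if h : (j : ℕ) < d then f ⟨j, h⟩ else g j)
      = ∑ j, f j + ∑ j : Fin k, g (Fin.natAdd d j) := by
  simp [Fin.sum_univ_add]

theorem le_of_colSum_eq_one_of_rowSum_le_one {d N : ℕ} (A : Matrix (Fin N) (Fin d) ℝ)
    (hcol : ∀ j, ∑ l, A l j = 1) (hrow : ∀ l, ∑ j, A l j ≤ 1) : d ≤ N := by
  have : (d : ℝ) ≤ N :=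
    calc (d : ℝ) = ∑ l, ∑ j, A l j := by simp [sum_comm (f := A), hcol]
      _ ≤ ∑ _l : Fin N, 1 := sum_le_sum fun l _ => hrow l
      _ = N := by simp
  exact_mod_cast this

section PadColumns

variable {d k : ℕ} (A : Matrix (Fin (d + k)) (Fin d) ℝ)

noncomputable def padColumns : Matrix (Fin (d + k)) (Fin (d + k)) ℝ :=
  fun l j => if h : (j : ℕ) < d then A l ⟨j, h⟩ else (1 - ∑ i, A l i) / k

theorem sum_one_sub_rowSum (hcol : ∀ j, ∑ l, A l j = 1) :
    ∑ l, (1 - ∑ j, A l j) = k := by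
  rw [sum_sub_distrib, sum_comm (f := A)]
  simp [hcol]

theorem padColumns_mem_doublyStochastic (hA : ∀ l j, 0 ≤ A l j)
    (hcol : ∀ j, ∑ l, A l j = 1) (hrow : ∀ l, ∑ j, A l j ≤ 1) :
    padColumns A ∈ doublyStochastic ℝ (Fin (d + k)) := by
  have hslack := sum_one_sub_rowSum A hcol
  have hslack_nonneg (l) : 0 ≤ 1 - ∑ j, A l j := sub_nonneg.2 (hrow l)
  refine mem_doublyStochastic_iff_sum.2 ⟨fun l j => ?nonneg, fun l => ?rowSum, fun j => ?colSum⟩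
  case nonneg =>
    unfold padColumns
    split_ifs
    · exact hA _ _
    · exact div_nonneg (hslack_nonneg l) k.cast_nonneg
  case rowSum =>
    simp only [padColumns]
    rw [sum_univ_add_dite_lt]
    simp only [sum_const, card_univ, Fintype.card_fin, nsmul_eq_mul]
    rcases k.eq_zero_or_pos with rfl | hk
    · have hl := (sum_eq_zero_iff_of_nonneg fun l _ => hslack_nonneg l).1
        (by simpa using hslack) l (mem_univ l)
      simp only [CharP.cast_eq_zero, zero_mul, add_zero]
      linarith
    · rw [mul_div_cancel₀ _ (by positivity)]
      ring
  case colSum =>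
    simp only [padColumns]
    split_ifs with hj
    · exact hcol _
    · have hk : (k : ℝ) ≠ 0 := by have := j.isLt; norm_cast; omega
      rw [← sum_div, hslack, div_self hk]

theorem padColumns_mulVec_zeroExtend (x : Fin d → ℝ) :
    padColumns A *ᵥ zeroExtend x = A *ᵥ x := by
  ext l
  simp [mulVec, dotProduct, Fin.sum_univ_add, padColumns, zeroExtend]

end PadColumns

theorem exists_mem_doublyStochastic_mulVec_zeroExtend {d N : ℕ} (A : Matrix (Fin N) (Fin d) ℝ)
    (hA : ∀ l j, 0 ≤ A l j) (hcol : ∀ j, ∑ l, A l j = 1) (hrow : ∀ l, ∑ j, A l j ≤ 1) :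
    d ≤ N ∧ ∃ M ∈ doublyStochastic ℝ (Fin N), ∀ x, M *ᵥ zeroExtend x = A *ᵥ x := by
  have hdN := le_of_colSum_eq_one_of_rowSum_le_one A hcol hrow
  obtain ⟨k, rfl⟩ := Nat.exists_eq_add_of_le hdN
  exact ⟨hdN, padColumns A, padColumns_mem_doublyStochastic A hA hcol hrow,
    padColumns_mulVec_zeroExtend A⟩

/-- Bistochasticity of fine-grained measurement statistics (appendix Lemma
'Bistochastic'): the number of outcomes of a fine-grained measurement is at
least the maximal number `d` of perfectly distinguishable states, and the
outcome probability vector of the measurement on a state is obtained from the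
(zero-extended) spectral coefficient vector by a doubly stochastic matrix. -/
theorem finegrained_statistics_bistochastic
    {V : Type*} [NormedAddCommGroup V] [InnerProductSpace ℝ V]
    (u : V) (d N : ℕ) (ω : Fin d → V)
    (hωsum : (∑ j, ω j) = u) (hωn : ∀ j, ⟪u, ω j⟫ = 1)
    (ν : Fin N → V) (c : Fin N → ℝ)
    (hc0 : ∀ l, 0 ≤ c l) (hc1 : ∀ l, c l ≤ 1)
    (hνn : ∀ l, ⟪u, ν l⟫ = 1)
    (hcsum : (∑ l, c l • ν l) = u)
    (hpos : ∀ l j, 0 ≤ ⟪ν l, ω j⟫) :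
    d ≤ N ∧
      ∀ p : Fin d → ℝ, (∀ j, 0 ≤ p j) → ((∑ j, p j) = 1) →
        ∃ M : Matrix (Fin N) (Fin N) ℝ,
          (∀ l j, 0 ≤ M l j) ∧
          (∀ l, (∑ j, M l j) = 1) ∧
          (∀ j, (∑ l, M l j) = 1) ∧
          ∀ l, c l * ⟪ν l, (∑ j, p j • ω j)⟫
            = ∑ j : Fin N, M l j * (if h : (j : ℕ) < d then p ⟨(j : ℕ), h⟩ else 0) := by
  let A : Matrix (Fin N) (Fin d) ℝ := of fun l j => c l * ⟪ν l, ω j⟫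
  have hcol (j : Fin d) : ∑ l, A l j = 1 := by
    simp only [A, of_apply, ← real_inner_smul_left, ← sum_inner, hcsum, hωn]
  have hrow (l : Fin N) : ∑ j, A l j = c l := by
    simp only [A, of_apply, ← mul_sum, ← inner_sum, hωsum, real_inner_comm u, hνn, mul_one]
  obtain ⟨hdN, M, hM, hMA⟩ := exists_mem_doublyStochastic_mulVec_zeroExtend A
    (fun l j => mul_nonneg (hc0 l) (hpos l j)) hcol fun l => (hrow l).trans_le (hc1 l)
  obtain ⟨hM0, hMrow, hMcol⟩ := mem_doublyStochastic_iff_sum.1 hM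
  refine ⟨hdN, fun p _ _ => ⟨M, hM0, hMrow, hMcol, fun l => ?_⟩⟩
  calc c l * ⟪ν l, ∑ j, p j • ω j⟫ = (A *ᵥ p) l := by
        simp only [A, mulVec, dotProduct, of_apply, inner_sum, mul_sum, real_inner_smul_right,
          mul_left_comm, mul_comm]
    _ = (M *ᵥ zeroExtend p) l := by rw [hMA]
end
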